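/- arXiv:0904.2949 — 5 statements merged into one kernel-verified Lean document; each statement's English description precedes it below -/
import Mathlib

section
/- Assume: (D5) p_n^{3/2} L_n →_pr 0, where L_n = max_{j,k} |S_{n,j,k} − Σ_{n,j,k}|; and (D6) there are constants 0 < c₁ ≤ c₂ < ∞ such that every eigenvalue of Σ_n lies in [c₁, c₂] for all n. Then (T_n^* − T_n^0)/p_n^{1/2} →_pr 0. -/
open MeasureTheory ProbabilityTheory Filter Matrix
open scoped ENNReal NNReal BigOperators

/-- `X̄ₙ = n⁻¹ ∑ᵢ Xₙᵢ`. -/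
noncomputable def xbar (p n : ℕ) (x : Fin n → EuclideanSpace ℝ (Fin p)) :
    EuclideanSpace ℝ (Fin p) :=
  (n : ℝ)⁻¹ • ∑ i, x i

/-- `Sₙ = n⁻¹ ∑ᵢ Xₙᵢ Xₙᵢᵀ`. -/
noncomputable def Smat (p n : ℕ) (x : Fin n → EuclideanSpace ℝ (Fin p)) :
    Matrix (Fin p) (Fin p) ℝ :=
  (n : ℝ)⁻¹ • ∑ i, Matrix.of (fun j k => x i j * x i k)

/-- `Tₙ* = n X̄ₙᵀ Sₙ⁻¹ X̄ₙ` (equal to `0` when `Sₙ` is singular, by the `Matrix.inv`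
convention). -/
noncomputable def Tstar (p n : ℕ) (x : Fin n → EuclideanSpace ℝ (Fin p)) : ℝ :=
  (n : ℝ) * ((fun j => xbar p n x j) ⬝ᵥ ((Smat p n x)⁻¹ *ᵥ fun j => xbar p n x j))

/-- `Tₙ⁰ = n X̄ₙᵀ Σₙ⁻¹ X̄ₙ`, the population version of `Tₙ*`. -/
noncomputable def Tzero (p n : ℕ) (x : Fin n → EuclideanSpace ℝ (Fin p))
    (S : Matrix (Fin p) (Fin p) ℝ) : ℝ :=
  (n : ℝ) * ((fun j => xbar p n x j) ⬝ᵥ (S⁻¹ *ᵥ fun j => xbar p n x j))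

/-- `Lₙ = max_{j,k} |Sₙ,ⱼₖ − Σₙ,ⱼₖ|`. -/
noncomputable def Lmax (p n : ℕ) (x : Fin n → EuclideanSpace ℝ (Fin p))
    (S : Matrix (Fin p) (Fin p) ℝ) : ℝ :=
  ⨆ j : Fin p, ⨆ k : Fin p, |Smat p n x j k - S j k|

/-!
On the event `p Lₙ ≤ c₁/2`, which (D5) makes overwhelmingly likely, the entrywise bound
`|Sₙ - Σₙ| ≤ Lₙ` moves the quadratic form of `Σₙ` by at most `p Lₙ |u|²`, so `Sₙ ≥ c₁/2`, and
the resolvent identity `Sₙ⁻¹ - Σₙ⁻¹ = Sₙ⁻¹ (Σₙ - Sₙ) Σₙ⁻¹` gives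
`|Tₙ* - Tₙ⁰| ≤ (2c₂/c₁²) p Lₙ Tₙ⁰`, i.e. `|Tₙ* - Tₙ⁰| / √p ≤ (2c₂/c₁²) · p^{3/2} Lₙ · Tₙ⁰/p`.
Independence and mean zero give `E Tₙ⁰ = tr (Σₙ⁻¹ Σₙ) = p`, so by Markov's inequality `Tₙ⁰/p`
is bounded in probability, and its product with `p^{3/2} Lₙ → 0` tends to zero in probability.
-/

namespace Matrix

variable {ι : Type*} [Fintype ι]

theorem sq_dotProduct_le (u w : ι → ℝ) : (u ⬝ᵥ w) ^ 2 ≤ (u ⬝ᵥ u) * (w ⬝ᵥ w) := by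
  simpa only [dotProduct, sq] using Finset.sum_mul_sq_le_sq_mul_sq Finset.univ u w

theorem sq_sum_abs_le_card_mul_dotProduct_self (u : ι → ℝ) :
    (∑ j, |u j|) ^ 2 ≤ Fintype.card ι * (u ⬝ᵥ u) := by
  have := sq_sum_le_card_mul_sum_sq (s := Finset.univ) (f := fun j => |u j|)
  simpa only [sq_abs, dotProduct, ← sq, Finset.card_univ] using this

theorem card_mul_nonneg_of_abs_le {M : Matrix ι ι ℝ} {L : ℝ} (hM : ∀ j k, |M j k| ≤ L) :
    0 ≤ Fintype.card ι * L := by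
  rcases isEmpty_or_nonempty ι with hι | ⟨⟨j⟩⟩
  · simp
  · exact mul_nonneg (Nat.cast_nonneg _) ((abs_nonneg _).trans (hM j j))

theorem sq_dotProduct_mulVec_le_of_abs_le {M : Matrix ι ι ℝ} {L : ℝ} (hM : ∀ j k, |M j k| ≤ L)
    (u w : ι → ℝ) :
    (u ⬝ᵥ M *ᵥ w) ^ 2 ≤ (Fintype.card ι * L) ^ 2 * ((u ⬝ᵥ u) * (w ⬝ᵥ w)) := by
  have habs : |u ⬝ᵥ M *ᵥ w| ≤ L * ((∑ j, |u j|) * ∑ k, |w k|) := calc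
    |u ⬝ᵥ M *ᵥ w| = |∑ j, ∑ k, u j * M j k * w k| := by
      simp only [dotProduct, mulVec, Finset.mul_sum, mul_assoc]
    _ ≤ ∑ j, ∑ k, |u j| * |M j k| * |w k| := by
      refine (Finset.abs_sum_le_sum_abs _ _).trans (Finset.sum_le_sum fun j _ => ?_)
      refine (Finset.abs_sum_le_sum_abs _ _).trans_eq (Finset.sum_congr rfl fun k _ => ?_)
      rw [abs_mul, abs_mul]
    _ ≤ ∑ j, ∑ k, |u j| * L * |w k| := by gcongr with j _ k _; exact hM j k
    _ = L * ((∑ j, |u j|) * ∑ k, |w k|) := by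
      rw [Finset.sum_mul_sum, Finset.mul_sum]
      refine Finset.sum_congr rfl fun j _ => ?_
      rw [Finset.mul_sum]
      exact Finset.sum_congr rfl fun k _ => by ring
  have hu := sq_sum_abs_le_card_mul_dotProduct_self u
  have hw := sq_sum_abs_le_card_mul_dotProduct_self w
  calc (u ⬝ᵥ M *ᵥ w) ^ 2 = |u ⬝ᵥ M *ᵥ w| ^ 2 := (sq_abs _).symm
    _ ≤ L ^ 2 * ((∑ j, |u j|) ^ 2 * (∑ k, |w k|) ^ 2) := by
      rw [← mul_pow, ← mul_pow]
      exact pow_le_pow_left₀ (abs_nonneg _) habs 2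
    _ ≤ L ^ 2 * ((Fintype.card ι * (u ⬝ᵥ u)) * (Fintype.card ι * (w ⬝ᵥ w))) :=
      mul_le_mul_of_nonneg_left (mul_le_mul hu hw (sq_nonneg _) ((sq_nonneg _).trans hu))
        (sq_nonneg L)
    _ = (Fintype.card ι * L) ^ 2 * ((u ⬝ᵥ u) * (w ⬝ᵥ w)) := by ring

theorem mul_dotProduct_self_le_of_abs_sub_le {S Sg : Matrix ι ι ℝ} {c L : ℝ}
    (hSg : ∀ u, c * (u ⬝ᵥ u) ≤ u ⬝ᵥ Sg *ᵥ u) (hL : ∀ j k, |S j k - Sg j k| ≤ L) (u : ι → ℝ) :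
    (c - Fintype.card ι * L) * (u ⬝ᵥ u) ≤ u ⬝ᵥ S *ᵥ u := by
  have hsq := sq_dotProduct_mulVec_le_of_abs_le (M := S - Sg) hL u u
  have hdiff : |u ⬝ᵥ (S - Sg) *ᵥ u| ≤ Fintype.card ι * L * (u ⬝ᵥ u) :=
    abs_le_of_sq_le_sq (by linarith [hsq])
      (mul_nonneg (card_mul_nonneg_of_abs_le hL) (dotProduct_self_star_nonneg u))
  rw [sub_mulVec, dotProduct_sub] at hdiff
  linarith [hSg u, neg_abs_le (u ⬝ᵥ S *ᵥ u - u ⬝ᵥ Sg *ᵥ u)]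

theorem sq_mul_dotProduct_self_le {M : Matrix ι ι ℝ} {c : ℝ} (hc : 0 < c)
    (hM : ∀ u, c * (u ⬝ᵥ u) ≤ u ⬝ᵥ M *ᵥ u) (a : ι → ℝ) :
    c ^ 2 * (a ⬝ᵥ a) ≤ (M *ᵥ a) ⬝ᵥ (M *ᵥ a) := by
  have ha : 0 ≤ a ⬝ᵥ a := dotProduct_self_star_nonneg a
  rcases ha.eq_or_lt with h0 | hpos
  · rw [← h0, mul_zero]
    exact dotProduct_self_star_nonneg _
  · have : (c * (a ⬝ᵥ a)) ^ 2 ≤ (a ⬝ᵥ a) * ((M *ᵥ a) ⬝ᵥ (M *ᵥ a)) :=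
      (pow_le_pow_left₀ (by positivity) (hM a) 2).trans (sq_dotProduct_le a (M *ᵥ a))
    nlinarith

theorem PosDef.of_mul_dotProduct_self_le {A : Matrix ι ι ℝ} (hA : A.IsHermitian) {c : ℝ}
    (hc : 0 < c) (h : ∀ u, c * (u ⬝ᵥ u) ≤ u ⬝ᵥ A *ᵥ u) : A.PosDef :=
  .of_dotProduct_mulVec_pos hA fun u hu => by
    have := dotProduct_star_self_pos_iff.mpr hu
    simp only [star_trivial] at this ⊢
    exact (mul_pos hc this).trans_le (h u)

variable [DecidableEq ι]

section LoewnerOrder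

open scoped MatrixOrder

theorem mul_dotProduct_self_le_of_algebraMap_le {A : Matrix ι ι ℝ} {c : ℝ}
    (h : algebraMap ℝ (Matrix ι ι ℝ) c ≤ A) (u : ι → ℝ) : c * (u ⬝ᵥ u) ≤ u ⬝ᵥ A *ᵥ u := by
  have := (Matrix.le_iff.mp h).dotProduct_mulVec_nonneg u
  simpa [Algebra.algebraMap_eq_smul_one, sub_mulVec, smul_mulVec] using this

theorem IsHermitian.mul_dotProduct_self_le {A : Matrix ι ι ℝ} (hA : A.IsHermitian) {c : ℝ}
    (h : ∀ μ ∈ spectrum ℝ A, c ≤ μ) (u : ι → ℝ) : c * (u ⬝ᵥ u) ≤ u ⬝ᵥ A *ᵥ u :=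
  mul_dotProduct_self_le_of_algebraMap_le
    ((algebraMap_le_iff_le_spectrum hA.isSelfAdjoint).mpr h) u

theorem IsHermitian.inv_mul_dotProduct_self_le {A : Matrix ι ι ℝ} (hA : A.IsHermitian) {c : ℝ}
    (h : ∀ μ ∈ spectrum ℝ A, 0 < μ ∧ μ ≤ c) (u : ι → ℝ) :
    c⁻¹ * (u ⬝ᵥ u) ≤ u ⬝ᵥ A⁻¹ *ᵥ u := by
  have hunit : IsUnit A := (spectrum.zero_notMem_iff ℝ).mp fun h0 => (h 0 h0).1.false
  have hinv : A⁻¹ = cfc (fun x : ℝ => x⁻¹) A := by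
    rw [nonsing_inv_eq_ringInverse, cfc_ringInverse_id A hunit hA.isSelfAdjoint]
  refine mul_dotProduct_self_le_of_algebraMap_le ?_ u
  rw [hinv]
  refine (algebraMap_le_cfc_iff (fun x : ℝ => x⁻¹) c⁻¹ A
    (continuousOn_id.inv₀ fun μ hμ => (h μ hμ).1.ne') hA.isSelfAdjoint).mpr ?_
  exact fun μ hμ => inv_anti₀ (h μ hμ).1 (h μ hμ).2

end LoewnerOrder

theorem dotProduct_inv_mulVec_sub_inv_mulVec {S Sg : Matrix ι ι ℝ} (hS : S.IsHermitian)
    (hunit : IsUnit S ↔ IsUnit Sg) (v : ι → ℝ) :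
    v ⬝ᵥ S⁻¹ *ᵥ v - v ⬝ᵥ Sg⁻¹ *ᵥ v = (S⁻¹ *ᵥ v) ⬝ᵥ (Sg - S) *ᵥ (Sg⁻¹ *ᵥ v) := by
  have hvec : v ᵥ* S⁻¹ = S⁻¹ *ᵥ v := by
    rw [← vecMul_transpose, transpose_nonsing_inv, ← conjTranspose_eq_transpose_of_trivial, hS.eq]
  rw [← dotProduct_sub, ← sub_mulVec, inv_sub_inv hunit, ← mulVec_mulVec, ← mulVec_mulVec,
    dotProduct_mulVec, hvec]

theorem abs_dotProduct_inv_mulVec_sub_le {S Sg : Matrix ι ι ℝ} (hS : S.IsHermitian)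
    (hSg : Sg.IsHermitian) {c₁ c₂ L : ℝ} (hc₁ : 0 < c₁) (hc₂ : 0 < c₂)
    (hspec : spectrum ℝ Sg ⊆ Set.Icc c₁ c₂) (hL : ∀ j k, |S j k - Sg j k| ≤ L)
    (hsmall : Fintype.card ι * L ≤ c₁ / 2) (v : ι → ℝ) :
    |v ⬝ᵥ S⁻¹ *ᵥ v - v ⬝ᵥ Sg⁻¹ *ᵥ v|
      ≤ 2 * c₂ / c₁ ^ 2 * (Fintype.card ι * L) * (v ⬝ᵥ Sg⁻¹ *ᵥ v) := by
  have hcardL : 0 ≤ Fintype.card ι * L := card_mul_nonneg_of_abs_le hL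
  have hSg_low : ∀ u, c₁ * (u ⬝ᵥ u) ≤ u ⬝ᵥ Sg *ᵥ u :=
    hSg.mul_dotProduct_self_le fun μ hμ => (hspec hμ).1
  have hS_low (u : ι → ℝ) : c₁ / 2 * (u ⬝ᵥ u) ≤ u ⬝ᵥ S *ᵥ u :=
    (mul_le_mul_of_nonneg_right (by linarith) (dotProduct_self_star_nonneg u)).trans
      (mul_dotProduct_self_le_of_abs_sub_le hSg_low hL u)
  have hSg_unit : IsUnit Sg := (spectrum.zero_notMem_iff ℝ).mp fun h0 => hc₁.not_ge (hspec h0).1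
  have hS_unit : IsUnit S := (PosDef.of_mul_dotProduct_self_le hS (by positivity) hS_low).isUnit
  set a := S⁻¹ *ᵥ v
  set b := Sg⁻¹ *ᵥ v
  have ha : (c₁ / 2) ^ 2 * (a ⬝ᵥ a) ≤ v ⬝ᵥ v := by
    simpa [a, mulVec_mulVec, mul_nonsing_inv _ ((isUnit_iff_isUnit_det S).mp hS_unit)] using
      sq_mul_dotProduct_self_le (by positivity) hS_low a
  have hb : c₁ ^ 2 * (b ⬝ᵥ b) ≤ v ⬝ᵥ v := by
    simpa [b, mulVec_mulVec, mul_nonsing_inv _ ((isUnit_iff_isUnit_det Sg).mp hSg_unit)] using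
      sq_mul_dotProduct_self_le hc₁ hSg_low b
  have hv : v ⬝ᵥ v ≤ c₂ * (v ⬝ᵥ b) := by
    have := hSg.inv_mul_dotProduct_self_le
      (fun μ hμ => ⟨hc₁.trans_le (hspec hμ).1, (hspec hμ).2⟩) v
    rwa [inv_mul_le_iff₀ hc₂] at this
  have hsq := sq_dotProduct_mulVec_le_of_abs_le (M := Sg - S)
    (fun j k => by rw [sub_apply, abs_sub_comm]; exact hL j k) a b
  rw [dotProduct_inv_mulVec_sub_inv_mulVec hS (by simp [hS_unit, hSg_unit])]
  have hvv : 0 ≤ v ⬝ᵥ v := dotProduct_self_star_nonneg v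
  have hw : 0 ≤ v ⬝ᵥ b := nonneg_of_mul_nonneg_right (hvv.trans hv) hc₂
  refine abs_le_of_sq_le_sq (hsq.trans ?_) (by positivity)
  calc (Fintype.card ι * L) ^ 2 * ((a ⬝ᵥ a) * (b ⬝ᵥ b))
      ≤ (Fintype.card ι * L) ^ 2 * ((v ⬝ᵥ v) / (c₁ / 2) ^ 2 * ((v ⬝ᵥ v) / c₁ ^ 2)) := by
        rw [← le_div_iff₀' (by positivity)] at ha hb
        gcongr
        exact dotProduct_self_star_nonneg b
    _ ≤ (Fintype.card ι * L) ^ 2 * (c₂ * (v ⬝ᵥ b) / (c₁ / 2) ^ 2 * (c₂ * (v ⬝ᵥ b) / c₁ ^ 2)) := by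
        gcongr
    _ = (2 * c₂ / c₁ ^ 2 * (Fintype.card ι * L) * (v ⬝ᵥ b)) ^ 2 := by
        field_simp

end Matrix

namespace MeasureTheory

variable {Ω ι : Type*} [MeasurableSpace Ω] {P : Measure Ω} {l : Filter ι}

/-- The Bochner integral of a non-integrable function is `0`. -/
theorem memLp_two_of_integral_mul_self_ne_zero {f : Ω → ℝ} (hf : AEStronglyMeasurable f P)
    (h : ∫ ω, f ω * f ω ∂P ≠ 0) : MemLp f 2 P :=
  (memLp_two_iff_integrable_sq hf).mpr <| by
    simpa only [sq] using not_imp_comm.mp integral_undef h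

theorem measureReal_le_div_of_integral_le {W : Ω → ℝ} (hW : 0 ≤ᵐ[P] W) (hint : Integrable W P)
    {K M : ℝ} (hK : 0 < K) (hM : ∫ ω, W ω ∂P ≤ M) : P.real {ω | K ≤ W ω} ≤ M / K := by
  rw [le_div_iff₀' hK]
  exact (mul_meas_ge_le_integral_of_nonneg hW hint K).trans hM

theorem TendstoInMeasure.of_abs_le_mul [IsFiniteMeasure P] {Y Z W : ι → Ω → ℝ} {η M : ℝ}
    (hη : 0 < η) (hZ : TendstoInMeasure P Z l fun _ => 0) (hW : ∀ i ω, 0 ≤ W i ω)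
    (hW_int : ∀ᶠ i in l, Integrable (W i) P) (hW_le : ∀ᶠ i in l, ∫ ω, W i ω ∂P ≤ M)
    (hY : ∀ i ω, |Z i ω| < η → |Y i ω| ≤ |Z i ω| * W i ω) :
    TendstoInMeasure P Y l fun _ => 0 := by
  simp only [tendstoInMeasure_iff_measureReal_dist, dist_zero_right, Real.norm_eq_abs] at hZ ⊢
  intro ε hε
  refine tendsto_order.2 ⟨fun δ hδ => .of_forall fun i => hδ.trans_le measureReal_nonneg,
    fun δ hδ => ?_⟩
  obtain ⟨K, hK0, hK⟩ : ∃ K : ℝ, 0 < K ∧ 2 * M / δ < K :=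
    ⟨max (2 * M / δ) 0 + 1, by positivity, by linarith [le_max_left (2 * M / δ) 0]⟩
  have hMK : M / K < δ / 2 := by
    rw [div_lt_iff₀ hK0]
    rw [div_lt_iff₀ hδ] at hK
    linarith
  set a := min η (ε / K)
  have ha : 0 < a := lt_min hη (by positivity)
  filter_upwards [(tendsto_order.1 (hZ a ha)).2 (δ / 2) (by positivity), hW_int, hW_le]
    with i hZi hWi hWi_le
  have hsub : {ω | ε ≤ |Y i ω|} ⊆ {ω | a ≤ |Z i ω|} ∪ {ω | K ≤ W i ω} := by
    intro ω hω
    by_contra hnot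
    simp only [Set.mem_union, Set.mem_ofPred_eq, not_or, not_le] at hω hnot
    have : |Y i ω| < ε := calc
      |Y i ω| ≤ |Z i ω| * W i ω := hY i ω (hnot.1.trans_le (min_le_left _ _))
      _ ≤ |Z i ω| * K := by gcongr; exact hnot.2.le
      _ < a * K := by gcongr; exact hnot.1
      _ ≤ ε / K * K := by gcongr; exact min_le_right _ _
      _ = ε := div_mul_cancel₀ ε hK0.ne'
    exact hω.not_gt this
  calc P.real {ω | ε ≤ |Y i ω|}
      ≤ P.real {ω | a ≤ |Z i ω|} + P.real {ω | K ≤ W i ω} :=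
        (measureReal_mono hsub).trans (measureReal_union_le _ _)
    _ < δ / 2 + δ / 2 := by
        gcongr
        exact (measureReal_le_div_of_integral_le (.of_forall (hW i)) hWi hK0 hWi_le).trans_lt hMK
    _ = δ := add_halves δ

end MeasureTheory

section Statistics

variable {q n : ℕ}

theorem xbar_apply (x : Fin n → EuclideanSpace ℝ (Fin q)) (j : Fin q) :
    xbar q n x j = (n : ℝ)⁻¹ * ∑ i, x i j := by
  simp only [xbar, PiLp.smul_apply, smul_eq_mul, WithLp.ofLp_sum, Finset.sum_apply]

theorem Smat_isHermitian (x : Fin n → EuclideanSpace ℝ (Fin q)) : (Smat q n x).IsHermitian := by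
  ext j k
  simp [Smat, Matrix.sum_apply, mul_comm]

theorem abs_Smat_sub_le_Lmax (x : Fin n → EuclideanSpace ℝ (Fin q))
    (S : Matrix (Fin q) (Fin q) ℝ) (j k : Fin q) : |Smat q n x j k - S j k| ≤ Lmax q n x S :=
  (le_ciSup (Set.finite_range _).bddAbove k).trans
    (le_ciSup (f := fun j => ⨆ k, |Smat q n x j k - S j k|) (Set.finite_range _).bddAbove j)

theorem Tzero_eq_sum (x : Fin n → EuclideanSpace ℝ (Fin q)) (S : Matrix (Fin q) (Fin q) ℝ) :
    Tzero q n x S = (n : ℝ)⁻¹ * ∑ j, ∑ k, S⁻¹ j k * ((∑ i, x i j) * ∑ i, x i k) := by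
  have hx : (fun j => xbar q n x j) = (n : ℝ)⁻¹ • fun j => ∑ i, x i j := funext (xbar_apply x)
  rw [Tzero, hx, mulVec_smul, dotProduct_smul, smul_dotProduct, smul_eq_mul, smul_eq_mul]
  set s : Fin q → ℝ := fun j => ∑ i, x i j
  calc (n : ℝ) * ((n : ℝ)⁻¹ * ((n : ℝ)⁻¹ * (s ⬝ᵥ S⁻¹ *ᵥ s))) = (n : ℝ)⁻¹ * (s ⬝ᵥ S⁻¹ *ᵥ s) := by
        rcases Nat.eq_zero_or_pos n with rfl | hn
        · simp
        · field_simp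
    _ = (n : ℝ)⁻¹ * ∑ j, ∑ k, S⁻¹ j k * (s j * s k) := by
        congr 1
        simp only [dotProduct, mulVec, Finset.mul_sum]
        exact Finset.sum_congr rfl fun j _ => Finset.sum_congr rfl fun k _ => by ring

theorem Tzero_nonneg (x : Fin n → EuclideanSpace ℝ (Fin q)) {S : Matrix (Fin q) (Fin q) ℝ}
    (hS : S.PosDef) : 0 ≤ Tzero q n x S := by
  have := hS.inv.posSemidef.dotProduct_mulVec_nonneg fun j => xbar q n x j
  rw [star_trivial] at this
  exact mul_nonneg (Nat.cast_nonneg n) this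

variable {S : Matrix (Fin q) (Fin q) ℝ} {c₁ c₂ : ℝ}

theorem abs_Tstar_sub_Tzero_le (x : Fin n → EuclideanSpace ℝ (Fin q)) (hS : S.IsHermitian)
    (hc₁ : 0 < c₁) (hc₂ : 0 < c₂) (hspec : spectrum ℝ S ⊆ Set.Icc c₁ c₂)
    (hsmall : q * Lmax q n x S ≤ c₁ / 2) :
    |Tstar q n x - Tzero q n x S| ≤ 2 * c₂ / c₁ ^ 2 * (q * Lmax q n x S) * Tzero q n x S := by
  have key := Matrix.abs_dotProduct_inv_mulVec_sub_le (Smat_isHermitian x) hS hc₁ hc₂ hspec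
    (abs_Smat_sub_le_Lmax x S) (by rwa [Fintype.card_fin]) fun j => xbar q n x j
  rw [Fintype.card_fin] at key
  rw [Tstar, Tzero, ← mul_sub, abs_mul, Nat.abs_cast]
  calc (n : ℝ) * |_| ≤ n * (2 * c₂ / c₁ ^ 2 * (q * Lmax q n x S) *
        ((fun j => xbar q n x j) ⬝ᵥ S⁻¹ *ᵥ fun j => xbar q n x j)) := by gcongr
    _ = _ := by ring

theorem abs_Tstar_sub_Tzero_div_sqrt_le (x : Fin n → EuclideanSpace ℝ (Fin q)) (hS : S.PosDef)
    (hc₁ : 0 < c₁) (hc₂ : 0 < c₂) (hspec : spectrum ℝ S ⊆ Set.Icc c₁ c₂)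
    (hsmall : |(q : ℝ) ^ ((3 : ℝ) / 2) * Lmax q n x S| < c₁ / 2) :
    |(Tstar q n x - Tzero q n x S) / Real.sqrt q|
      ≤ |(q : ℝ) ^ ((3 : ℝ) / 2) * Lmax q n x S| * (2 * c₂ / c₁ ^ 2 * (Tzero q n x S / q)) := by
  have hT := Tzero_nonneg x hS
  rcases Nat.eq_zero_or_pos q with rfl | hq
  · simp only [CharP.cast_eq_zero, Real.sqrt_zero, div_zero, abs_zero]
    positivity
  have hL : 0 ≤ Lmax q n x S := (abs_nonneg _).trans (abs_Smat_sub_le_Lmax x S ⟨0, hq⟩ ⟨0, hq⟩)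
  have hqR : (0 : ℝ) < q := Nat.cast_pos.mpr hq
  have hsqrt : 0 < Real.sqrt q := Real.sqrt_pos.mpr hqR
  have hrpow : (q : ℝ) ^ ((3 : ℝ) / 2) = q * Real.sqrt q := by
    rw [show (3 : ℝ) / 2 = 1 + 1 / 2 by norm_num, Real.rpow_add hqR, Real.rpow_one,
      Real.sqrt_eq_rpow]
  have hZ : 0 ≤ q * Real.sqrt q * Lmax q n x S := by positivity
  rw [hrpow, abs_of_nonneg hZ] at hsmall ⊢
  have hbound := abs_Tstar_sub_Tzero_le x hS.isHermitian hc₁ hc₂ hspec <| calc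
    q * Lmax q n x S ≤ q * Real.sqrt q * Lmax q n x S := by
      gcongr
      exact le_mul_of_one_le_right hqR.le (Real.one_le_sqrt.mpr (Nat.one_le_cast.mpr hq))
    _ ≤ c₁ / 2 := hsmall.le
  rw [abs_div, abs_of_pos hsqrt, div_le_iff₀ hsqrt]
  refine hbound.trans_eq ?_
  field_simp
  rw [Real.sq_sqrt hqR.le]
  ring

end Statistics

section Moments

variable {Ω : Type*} [MeasurableSpace Ω] {P : Measure Ω} {q n : ℕ}
  {X : Fin n → Ω → EuclideanSpace ℝ (Fin q)} {Sg : Matrix (Fin q) (Fin q) ℝ}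

theorem integrable_apply_mul_apply (hX : ∀ i, Measurable (X i))
    (hSig : ∀ i j k, Sg j k = ∫ ω, X i ω j * X i ω k ∂P) (hSg : Sg.PosDef) (i i' : Fin n)
    (j k : Fin q) : Integrable (fun ω => X i ω j * X i' ω k) P := by
  have hL2 (i : Fin n) (j : Fin q) : MemLp (fun ω => X i ω j) 2 P :=
    memLp_two_of_integral_mul_self_ne_zero (by fun_prop) (hSig i j j ▸ hSg.diag_pos.ne')
  exact (hL2 i j).integrable_mul (hL2 i' k)

theorem integral_apply_mul_apply (hX : ∀ i, Measurable (X i)) (hindep : iIndepFun X P)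
    (hmean : ∀ i j, ∫ ω, X i ω j ∂P = 0) (hSig : ∀ i j k, Sg j k = ∫ ω, X i ω j * X i ω k ∂P)
    (i i' : Fin n) (j k : Fin q) :
    ∫ ω, X i ω j * X i' ω k ∂P = if i = i' then Sg j k else 0 := by
  split_ifs with h
  · subst h
    exact (hSig i j k).symm
  · have hind : IndepFun (fun ω => X i ω j) (fun ω => X i' ω k) P :=
      (hindep.indepFun h).comp (EuclideanSpace.proj j (𝕜 := ℝ)).measurable
        (EuclideanSpace.proj k (𝕜 := ℝ)).measurable
    rw [hind.integral_fun_mul_eq_mul_integral (by fun_prop) (by fun_prop), hmean, zero_mul]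

theorem integral_sum_apply_mul_sum_apply (hX : ∀ i, Measurable (X i)) (hindep : iIndepFun X P)
    (hmean : ∀ i j, ∫ ω, X i ω j ∂P = 0) (hSig : ∀ i j k, Sg j k = ∫ ω, X i ω j * X i ω k ∂P)
    (hSg : Sg.PosDef) (j k : Fin q) :
    ∫ ω, (∑ i, X i ω j) * (∑ i, X i ω k) ∂P = n * Sg j k := by
  simp_rw [Finset.sum_mul_sum]
  rw [integral_finsetSum _ fun i _ =>
    integrable_finsetSum _ fun i' _ => integrable_apply_mul_apply hX hSig hSg i i' j k]
  simp_rw [integral_finsetSum _ fun i' _ => integrable_apply_mul_apply hX hSig hSg _ i' j k,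
    integral_apply_mul_apply hX hindep hmean hSig]
  simp

theorem integrable_Tzero (hX : ∀ i, Measurable (X i))
    (hSig : ∀ i j k, Sg j k = ∫ ω, X i ω j * X i ω k ∂P) (hSg : Sg.PosDef) :
    Integrable (fun ω => Tzero q n (fun i => X i ω) Sg) P := by
  simp only [Tzero_eq_sum, Finset.sum_mul_sum]
  refine .const_mul (integrable_finsetSum _ fun j _ => integrable_finsetSum _ fun k _ => ?_) _
  exact .const_mul (integrable_finsetSum _ fun i _ => integrable_finsetSum _ fun i' _ =>
    integrable_apply_mul_apply hX hSig hSg i i' j k) _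

theorem integral_Tzero (hn : 0 < n) (hX : ∀ i, Measurable (X i)) (hindep : iIndepFun X P)
    (hmean : ∀ i j, ∫ ω, X i ω j ∂P = 0) (hSig : ∀ i j k, Sg j k = ∫ ω, X i ω j * X i ω k ∂P)
    (hSg : Sg.PosDef) :
    ∫ ω, Tzero q n (fun i => X i ω) Sg ∂P = q := by
  have hint (j k : Fin q) : Integrable (fun ω => (∑ i, X i ω j) * ∑ i, X i ω k) P := by
    simp only [Finset.sum_mul_sum]
    exact integrable_finsetSum _ fun i _ => integrable_finsetSum _ fun i' _ =>
      integrable_apply_mul_apply hX hSig hSg i i' j k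
  simp_rw [Tzero_eq_sum, integral_const_mul]
  have hint' (j : Fin q) :
      Integrable (fun ω => ∑ k, Sg⁻¹ j k * ((∑ i, X i ω j) * ∑ i, X i ω k)) P :=
    integrable_finsetSum _ fun k _ => (hint j k).const_mul _
  rw [integral_finsetSum _ fun j _ => hint' j]
  simp_rw [integral_finsetSum _ fun k _ => (hint _ k).const_mul _, integral_const_mul,
    integral_sum_apply_mul_sum_apply hX hindep hmean hSig hSg]
  calc (n : ℝ)⁻¹ * ∑ j, ∑ k, Sg⁻¹ j k * (n * Sg j k) = ∑ j, (Sg⁻¹ * Sg) j j := by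
        rw [Finset.mul_sum]
        refine Finset.sum_congr rfl fun j _ => ?_
        rw [Finset.mul_sum, mul_apply]
        refine Finset.sum_congr rfl fun k _ => ?_
        rw [← hSg.isHermitian.apply k j, star_trivial]
        field_simp
    _ = q := by
        rw [nonsing_inv_mul _ ((isUnit_iff_isUnit_det Sg).mp hSg.isUnit)]
        simp [one_apply]

end Moments

theorem growing_p_population_approximation_general
    {Ω : Type*} [MeasurableSpace Ω] (P : Measure Ω) [IsProbabilityMeasure P]
    (p : ℕ → ℕ)
    (X : (n : ℕ) → Fin n → Ω → EuclideanSpace ℝ (Fin (p n)))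
    (hXmeas : ∀ n i, Measurable (X n i))
    (hindep : ∀ n, iIndepFun (X n) P)
    (hmean : ∀ n (i : Fin n) (j : Fin (p n)), ∫ ω, X n i ω j ∂P = 0)
    (Sig : (n : ℕ) → Matrix (Fin (p n)) (Fin (p n)) ℝ)
    (hSig : ∀ n (i : Fin n) (j k : Fin (p n)),
      Sig n j k = ∫ ω, X n i ω j * X n i ω k ∂P)
    (hSigpd : ∀ n, (Sig n).PosDef)
    -- (D5)
    (hD5 : TendstoInMeasure P
      (fun n ω => (p n : ℝ) ^ ((3 : ℝ)/2) * Lmax (p n) n (fun i => X n i ω) (Sig n))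
      atTop (fun _ => (0 : ℝ)))
    -- (D6)
    (c₁ c₂ : ℝ) (hc₁ : 0 < c₁) (hc₁₂ : c₁ ≤ c₂)
    (heig : ∀ n, spectrum ℝ (Sig n) ⊆ Set.Icc c₁ c₂) :
    TendstoInMeasure P
      (fun n ω => (Tstar (p n) n (fun i => X n i ω)
        - Tzero (p n) n (fun i => X n i ω) (Sig n)) / Real.sqrt (p n))
      atTop (fun _ => (0 : ℝ)) := by
  have hc₂ : 0 < c₂ := hc₁.trans_le hc₁₂
  refine TendstoInMeasure.of_abs_le_mul (half_pos hc₁) hD5 (M := 2 * c₂ / c₁ ^ 2)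
    (W := fun n ω => 2 * c₂ / c₁ ^ 2 * (Tzero (p n) n (fun i => X n i ω) (Sig n) / p n))
    (fun n ω => by have := Tzero_nonneg (fun i => X n i ω) (hSigpd n); positivity)
    (.of_forall fun n =>
      ((integrable_Tzero (hXmeas n) (hSig n) (hSigpd n)).div_const _).const_mul _)
    ?_ fun n ω => abs_Tstar_sub_Tzero_div_sqrt_le _ (hSigpd n) hc₁ hc₂ (heig n)
  filter_upwards [eventually_gt_atTop 0] with n hn
  rw [integral_const_mul, integral_div,
    integral_Tzero hn (hXmeas n) (hindep n) (hmean n) (hSig n) (hSigpd n)]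
  exact mul_le_of_le_one_right (by positivity) (div_self_le_one _)

/-- **Proposition 4.2 (first part).**
In the triangular-array setup with i.i.d. mean-zero rows `X n 1, …, X n n` in
`ℝ^{pₙ}` with positive definite covariance matrix `Σₙ`, conditions
(D5) `pₙ^{3/2} Lₙ →_pr 0` and
(D6) the eigenvalues of `Σₙ` stay away from zero and infinity,
imply `(Tₙ* − Tₙ⁰)/pₙ^{1/2} →_pr 0`. -/
theorem growing_p_population_approximation
    {Ω : Type*} [MeasurableSpace Ω] (P : Measure Ω) [IsProbabilityMeasure P]
    (p : ℕ → ℕ)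
    (X : (n : ℕ) → Fin n → Ω → EuclideanSpace ℝ (Fin (p n)))
    (hXmeas : ∀ n i, Measurable (X n i))
    (hindep : ∀ n, iIndepFun (X n) P)
    (hident : ∀ n, ∀ i j : Fin n, IdentDistrib (X n i) (X n j) P P)
    (hint : ∀ n (i : Fin n) (j : Fin (p n)), Integrable (fun ω => X n i ω j) P)
    (hmean : ∀ n (i : Fin n) (j : Fin (p n)), ∫ ω, X n i ω j ∂P = 0)
    (Sig : (n : ℕ) → Matrix (Fin (p n)) (Fin (p n)) ℝ)
    (hSig : ∀ n (i : Fin n) (j k : Fin (p n)),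
      Sig n j k = ∫ ω, X n i ω j * X n i ω k ∂P)
    (hSigpd : ∀ n, (Sig n).PosDef)
    -- (D5)
    (hD5 : TendstoInMeasure P
      (fun n ω => (p n : ℝ) ^ ((3 : ℝ)/2) * Lmax (p n) n (fun i => X n i ω) (Sig n))
      atTop (fun _ => (0 : ℝ)))
    -- (D6)
    (c₁ c₂ : ℝ) (hc₁ : 0 < c₁) (hc₁₂ : c₁ ≤ c₂)
    (heig : ∀ n, spectrum ℝ (Sig n) ⊆ Set.Icc c₁ c₂) :
    TendstoInMeasure P
      (fun n ω => (Tstar (p n) n (fun i => X n i ω)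
        - Tzero (p n) n (fun i => X n i ω) (Sig n)) / Real.sqrt (p n))
      atTop (fun _ => (0 : ℝ)) :=
  growing_p_population_approximation_general P p X hXmeas hindep hmean Sig hSig hSigpd hD5 c₁ c₂ hc₁
    hc₁₂ heig
end

section
/- For every ε > 0, P{(p_n/√n) D_n ≥ ε} ≤ n · (p_n^{3q/2}/(n^{q/2} ε^q)) · max_{i≤n} E‖X_{n,i}/p_n^{1/2}‖^q. Consequently, under condition (D7) — namely, for some q > 2, sup_n max_{i≤n} E‖X_{n,i}/p_n^{1/2}‖^q < ∞ and p_n^{3+6/(q−2)}/n → 0 — one has (p_n/√n) D_n →_pr 0 (condition (D1)). -/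
/-!
After rescaling `Yₙᵢ = Xₙᵢ / √pₙ`, the event `(pₙ/√n) Dₙ ≥ ε` forces some `‖Yₙᵢ‖` to exceed
`t = ε √n / pₙ^{3/2}`; a union bound over the `n` indices and Markov's inequality for the
`q`-th moment give the tail bound `n t⁻ᵠ max_i E‖Yₙᵢ‖ᵠ`. Under (D7) the right-hand side is
`O(n · pₙ^{3q/2} / n^{q/2}) = O((pₙ^{3+6/(q-2)} / n)^{(q-2)/2}) → 0`.
-/

open MeasureTheory ProbabilityTheory Filter Topology

section Markov

variable {Ω : Type*} [MeasurableSpace Ω] {μ : Measure Ω} [IsFiniteMeasure μ]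

theorem measure_le_le_ofReal_integral_rpow_div {f : Ω → ℝ} (hf : ∀ ω, 0 ≤ f ω) {q : ℝ}
    (hq : 0 < q) (hi : Integrable (fun ω => f ω ^ q) μ) {t : ℝ} (ht : 0 < t) :
    μ {ω | t ≤ f ω} ≤ ENNReal.ofReal ((∫ ω, f ω ^ q ∂μ) / t ^ q) := by
  have hset : {ω | t ≤ f ω} = {ω | t ^ q ≤ f ω ^ q} := by
    ext ω
    exact (Real.rpow_le_rpow_iff ht.le (hf ω) hq).symm
  have hmarkov := mul_meas_ge_le_integral_of_nonneg
    (Eventually.of_forall fun ω => Real.rpow_nonneg (hf ω) q) hi (t ^ q)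
  rw [hset, ← ENNReal.ofReal_toReal (measure_ne_top μ _)]
  exact ENNReal.ofReal_le_ofReal ((le_div_iff₀' (Real.rpow_pos_of_pos ht q)).2 hmarkov)

theorem measure_exists_le_le_ofReal_card_mul_iSup_integral_rpow_div {ι : Type*} [Fintype ι]
    {f : ι → Ω → ℝ} (hf : ∀ i ω, 0 ≤ f i ω) {q : ℝ} (hq : 0 < q)
    (hi : ∀ i, Integrable (fun ω => f i ω ^ q) μ) {t : ℝ} (ht : 0 < t) :
    μ {ω | ∃ i, t ≤ f i ω}
      ≤ ENNReal.ofReal (Fintype.card ι * (⨆ i, ∫ ω, f i ω ^ q ∂μ) / t ^ q) := by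
  have htq : 0 ≤ t ^ q := Real.rpow_nonneg ht.le q
  have hle_iSup : ∀ i, ∫ ω, f i ω ^ q ∂μ ≤ ⨆ i, ∫ ω, f i ω ^ q ∂μ :=
    le_ciSup (Set.finite_range _).bddAbove
  calc μ {ω | ∃ i, t ≤ f i ω} = μ (⋃ i, {ω | t ≤ f i ω}) := by rw [Set.ofPred_exists]
    _ ≤ ∑ i, μ {ω | t ≤ f i ω} := measure_iUnion_fintype_le _ _
    _ ≤ ∑ i, ENNReal.ofReal ((∫ ω, f i ω ^ q ∂μ) / t ^ q) := Finset.sum_le_sum fun i _ =>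
          measure_le_le_ofReal_integral_rpow_div (hf i) hq (hi i) ht
    _ = ENNReal.ofReal (∑ i, (∫ ω, f i ω ^ q ∂μ) / t ^ q) :=
          (ENNReal.ofReal_sum_of_nonneg fun i _ => div_nonneg
            (integral_nonneg fun ω => Real.rpow_nonneg (hf i ω) q) htq).symm
    _ ≤ _ := by
          refine ENNReal.ofReal_le_ofReal ?_
          calc ∑ i, (∫ ω, f i ω ^ q ∂μ) / t ^ q ≤ ∑ _i : ι, (⨆ i, ∫ ω, f i ω ^ q ∂μ) / t ^ q :=
                Finset.sum_le_sum fun i _ => div_le_div_of_nonneg_right (hle_iSup i) htq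
            _ = _ := by simp [mul_div_assoc]

end Markov

/-- `Dₙ = max_{1≤i≤n} ‖Xₙᵢ‖` (Euclidean norm). -/
noncomputable def Dmax (p n : ℕ) (x : Fin n → EuclideanSpace ℝ (Fin p)) : ℝ :=
  ⨆ i : Fin n, ‖x i‖

theorem Dmax_nonneg {p n : ℕ} (x : Fin n → EuclideanSpace ℝ (Fin p)) : 0 ≤ Dmax p n x :=
  Real.iSup_nonneg fun _ => norm_nonneg _

theorem exists_le_norm_of_le_Dmax {p n : ℕ} {x : Fin n → EuclideanSpace ℝ (Fin p)} {t : ℝ}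
    (ht : 0 < t) (hx : t ≤ Dmax p n x) : ∃ i, t ≤ ‖x i‖ := by
  rcases isEmpty_or_nonempty (Fin n) with hn | hn
  · rw [Dmax, Real.iSup_of_isEmpty] at hx
    exact absurd hx (not_le.2 ht)
  · obtain ⟨i, hi⟩ := exists_eq_ciSup_of_finite (f := fun i => ‖x i‖)
    exact ⟨i, hi ▸ hx⟩

theorem norm_smul_rpow_of_nonneg {E : Type*} [SeminormedAddCommGroup E] [NormedSpace ℝ E]
    {a : ℝ} (ha : 0 ≤ a) (x : E) (q : ℝ) : ‖a • x‖ ^ q = a ^ q * ‖x‖ ^ q := by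
  rw [norm_smul, Real.norm_of_nonneg ha, Real.mul_rpow ha (norm_nonneg x)]

theorem measure_le_div_sqrt_mul_Dmax_le {Ω : Type*} [MeasurableSpace Ω] (μ : Measure Ω)
    [IsFiniteMeasure μ] {p n : ℕ} (X : Fin n → Ω → EuclideanSpace ℝ (Fin p)) {q : ℝ} (hq : 0 < q)
    (hint : ∀ i, Integrable (fun ω => ‖X i ω‖ ^ q) μ) {ε : ℝ} (hε : 0 < ε) :
    μ {ω | ε ≤ ((p : ℝ) / Real.sqrt n) * Dmax p n (fun i => X i ω)}
      ≤ ENNReal.ofReal ((n : ℝ) * ((p : ℝ) ^ (3 * q / 2) / ((n : ℝ) ^ (q / 2) * ε ^ q))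
          * ⨆ i : Fin n, ∫ ω, ‖(Real.sqrt p)⁻¹ • X i ω‖ ^ q ∂μ) := by
  set c : ℝ := (p : ℝ) / Real.sqrt n
  obtain hc | hc := (show 0 ≤ c by positivity).eq_or_lt
  · simp [← hc, not_le.2 hε]
  have hp : (0 : ℝ) < p := Nat.cast_pos.2 (Nat.pos_of_ne_zero (by rintro rfl; simp [c] at hc))
  have hn : (0 : ℝ) < n := Nat.cast_pos.2 (Nat.pos_of_ne_zero (by rintro rfl; simp [c] at hc))
  have hsp : 0 < Real.sqrt p := Real.sqrt_pos.2 hp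
  set Y : Fin n → Ω → EuclideanSpace ℝ (Fin p) := fun i ω => (Real.sqrt p)⁻¹ • X i ω
  have hXY : ∀ i ω, ‖X i ω‖ = Real.sqrt p * ‖Y i ω‖ := fun i ω => by
    rw [norm_smul, Real.norm_of_nonneg (inv_nonneg.2 hsp.le), mul_inv_cancel_left₀ hsp.ne']
  set t := ε / (c * Real.sqrt p)
  have ht : 0 < t := by positivity
  have hsub : {ω | ε ≤ c * Dmax p n (fun i => X i ω)} ⊆ {ω | ∃ i, t ≤ ‖Y i ω‖} := by
    intro ω hω
    obtain ⟨i, hi⟩ := exists_le_norm_of_le_Dmax (div_pos hε hc) ((div_le_iff₀' hc).2 hω)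
    refine ⟨i, (div_le_iff₀' (by positivity)).2 ?_⟩
    rwa [mul_assoc, ← hXY, ← div_le_iff₀' hc]
  have hYint : ∀ i, Integrable (fun ω => ‖Y i ω‖ ^ q) μ := fun i => by
    simpa only [Y, norm_smul_rpow_of_nonneg (inv_nonneg.2 hsp.le)] using (hint i).const_mul _
  have htq : t ^ q = (n : ℝ) ^ (q / 2) * ε ^ q / (p : ℝ) ^ (3 * q / 2) := by
    have h3 : (p : ℝ) ^ (3 * q / 2) = (p : ℝ) ^ q * (p : ℝ) ^ (q / 2) := by
      rw [← Real.rpow_add hp]; ring_nf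
    rw [Real.div_rpow hε.le (by positivity), Real.mul_rpow hc.le hsp.le,
      Real.div_rpow hp.le (Real.sqrt_nonneg _), ← Real.rpow_div_two_eq_sqrt _ hn.le,
      ← Real.rpow_div_two_eq_sqrt _ hp.le, h3]
    field_simp
  calc μ {ω | ε ≤ c * Dmax p n (fun i => X i ω)} ≤ μ {ω | ∃ i, t ≤ ‖Y i ω‖} := measure_mono hsub
    _ ≤ _ := measure_exists_le_le_ofReal_card_mul_iSup_integral_rpow_div
          (fun i ω => norm_nonneg _) hq hYint ht
    _ = _ := by
          rw [Fintype.card_fin, htq, div_div_eq_mul_div]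
          simp only [Y]
          congr 1
          ring

theorem tendsto_natCast_mul_rpow_div_rpow_of_tendsto {a : ℕ → ℝ} (ha : ∀ n, 0 ≤ a n) {q : ℝ}
    (hq : 2 < q) (h : Tendsto (fun n => a n ^ (3 + 6 / (q - 2)) / n) atTop (𝓝 0)) :
    Tendsto (fun n : ℕ => (n : ℝ) * (a n ^ (3 * q / 2) / (n : ℝ) ^ (q / 2))) atTop (𝓝 0) := by
  have hr : 0 < (q - 2) / 2 := by linarith
  have hpow := h.rpow_const (p := (q - 2) / 2) (Or.inr hr.le)
  rw [Real.zero_rpow hr.ne'] at hpow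
  refine hpow.congr' ?_
  filter_upwards [eventually_ge_atTop 1] with n hn
  have hn : (0 : ℝ) < n := by exact_mod_cast hn
  have hexp : (3 + 6 / (q - 2)) * ((q - 2) / 2) = 3 * q / 2 := by
    field_simp [(by linarith : q - 2 ≠ 0)]
    ring
  have hsplit : (n : ℝ) ^ (q / 2) = (n : ℝ) ^ ((q - 2) / 2) * n := by
    rw [← Real.rpow_add_one hn.ne']
    ring_nf
  rw [Real.div_rpow (Real.rpow_nonneg (ha n) _) hn.le, ← Real.rpow_mul (ha n), hexp, hsplit]
  field_simp

theorem tendstoInMeasure_zero_of_tendsto_measure_le {Ω ι : Type*} [MeasurableSpace Ω]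
    {μ : Measure Ω} {l : Filter ι} {Z : ι → Ω → ℝ} (hZ : ∀ i ω, 0 ≤ Z i ω)
    (h : ∀ ε, 0 < ε → Tendsto (fun i => μ {ω | ε ≤ Z i ω}) l (𝓝 0)) :
    TendstoInMeasure μ Z l (fun _ => 0) := by
  rw [tendstoInMeasure_iff_dist]
  intro ε hε
  simpa only [Real.dist_eq, sub_zero, abs_of_nonneg (hZ _ _)] using h ε hε

theorem Dmax_tail_bound_and_D1_under_moments_general
    {Ω : Type*} [MeasurableSpace Ω] (P : Measure Ω) [IsProbabilityMeasure P]
    (p : ℕ → ℕ)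
    (X : (n : ℕ) → Fin n → Ω → EuclideanSpace ℝ (Fin (p n)))
    (q : ℝ) (hq : 2 < q)
    (hint : ∀ n (i : Fin n), Integrable (fun ω => ‖X n i ω‖ ^ q) P) :
    (∀ ε : ℝ, 0 < ε → ∀ n : ℕ,
      P {ω | ε ≤ ((p n : ℝ) / Real.sqrt n) * Dmax (p n) n (fun i => X n i ω)}
        ≤ ENNReal.ofReal ((n : ℝ) * ((p n : ℝ) ^ (3 * q / 2) / ((n : ℝ) ^ (q / 2) * ε ^ q))
            * ⨆ i : Fin n, ∫ ω, ‖(Real.sqrt (p n))⁻¹ • X n i ω‖ ^ q ∂P))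
    ∧ ((∃ M : ℝ, ∀ n (i : Fin n), ∫ ω, ‖(Real.sqrt (p n))⁻¹ • X n i ω‖ ^ q ∂P ≤ M) →
        Tendsto (fun n => (p n : ℝ) ^ (3 + 6 / (q - 2)) / (n : ℝ)) atTop (nhds 0) →
        TendstoInMeasure P
          (fun n ω => ((p n : ℝ) / Real.sqrt n) * Dmax (p n) n (fun i => X n i ω))
          atTop (fun _ => (0 : ℝ))) := by
  have htail := fun ε (hε : 0 < ε) n =>
    measure_le_div_sqrt_mul_Dmax_le P (X n) (by linarith) (hint n) hε
  refine ⟨htail, ?_⟩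
  rintro ⟨M, hM⟩ hpn
  refine tendstoInMeasure_zero_of_tendsto_measure_le
    (fun n ω => mul_nonneg (by positivity) (Dmax_nonneg _)) fun ε hε => ?_
  have hsup : ∀ n, (⨆ i : Fin n, ∫ ω, ‖(Real.sqrt (p n))⁻¹ • X n i ω‖ ^ q ∂P) ≤ max M 0 :=
    fun n => Real.iSup_le (fun i => (hM n i).trans (le_max_left _ _)) (le_max_right _ _)
  have hrate := ((tendsto_natCast_mul_rpow_div_rpow_of_tendsto (fun n => Nat.cast_nonneg (p n))
    hq hpn).mul_const (max M 0 / ε ^ q))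
  rw [zero_mul] at hrate
  refine tendsto_of_tendsto_of_tendsto_of_le_of_le tendsto_const_nhds
    (by simpa using ENNReal.tendsto_ofReal hrate) (fun n => zero_le)
    fun n => (htail ε hε n).trans (ENNReal.ofReal_le_ofReal ?_)
  calc _ = (n : ℝ) * ((p n : ℝ) ^ (3 * q / 2) / (n : ℝ) ^ (q / 2))
        * ((⨆ i : Fin n, ∫ ω, ‖(Real.sqrt (p n))⁻¹ • X n i ω‖ ^ q ∂P) / ε ^ q) := by ring
    _ ≤ _ := by gcongr; exact hsup n

/-- **Lemma 4.1(b).**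
For every `ε > 0`,
`P{(pₙ/√n) Dₙ ≥ ε} ≤ n · (pₙ^{3q/2}/(n^{q/2} εᵠ)) · max_{i≤n} E‖Xₙᵢ/pₙ^{1/2}‖ᵠ`.
Consequently, under condition (D7) — namely, for some `q > 2`,
`sup_n max_{i≤n} E‖Xₙᵢ/pₙ^{1/2}‖ᵠ < ∞` and `pₙ^{3+6/(q−2)}/n → 0` —
one has `(pₙ/√n) Dₙ →_pr 0` (condition (D1)). -/
theorem Dmax_tail_bound_and_D1_under_moments
    {Ω : Type*} [MeasurableSpace Ω] (P : Measure Ω) [IsProbabilityMeasure P]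
    (p : ℕ → ℕ)
    (X : (n : ℕ) → Fin n → Ω → EuclideanSpace ℝ (Fin (p n)))
    (hXmeas : ∀ n i, Measurable (X n i))
    (q : ℝ) (hq : 2 < q)
    (hint : ∀ n (i : Fin n), Integrable (fun ω => ‖X n i ω‖ ^ q) P) :
    (∀ ε : ℝ, 0 < ε → ∀ n : ℕ,
      P {ω | ε ≤ ((p n : ℝ) / Real.sqrt n) * Dmax (p n) n (fun i => X n i ω)}
        ≤ ENNReal.ofReal ((n : ℝ) * ((p n : ℝ) ^ (3 * q / 2) / ((n : ℝ) ^ (q / 2) * ε ^ q))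
            * ⨆ i : Fin n, ∫ ω, ‖(Real.sqrt (p n))⁻¹ • X n i ω‖ ^ q ∂P))
    ∧ ((∃ M : ℝ, ∀ n (i : Fin n), ∫ ω, ‖(Real.sqrt (p n))⁻¹ • X n i ω‖ ^ q ∂P ≤ M) →
        Tendsto (fun n => (p n : ℝ) ^ (3 + 6 / (q - 2)) / (n : ℝ)) atTop (nhds 0) →
        TendstoInMeasure P
          (fun n ω => ((p n : ℝ) / Real.sqrt n) * Dmax (p n) n (fun i => X n i ω))
          atTop (fun _ => (0 : ℝ))) :=
  Dmax_tail_bound_and_D1_under_moments_general P p X q hq hint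
end

section
/- Suppose there exist ε > 0 and r < 1 such that P{u^T X_{n,1} > −ε} ≤ r for every unit vector u ∈ ℝ^{p_n} and every n, and there is M < ∞ with |X_{n,i,j}| ≤ M almost surely for all n, i ≤ n, j ≤ p_n. If (p_n log p_n)/n → 0 as n → ∞, then P{0 lies in the interior of the convex hull of {X_{n,1}, …, X_{n,n}} in ℝ^{p_n}} → 1; equivalently, P{EL_n = 0} → 0 (condition (D0)). -/
open MeasureTheory ProbabilityTheory Filter
open scoped ENNReal NNReal RealInnerProductSpace BigOperators

/-- Empirical likelihood, with the supremum of the empty set equal to `0`. -/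
noncomputable def ELval (p n : ℕ) (x : Fin n → EuclideanSpace ℝ (Fin p)) : ℝ :=
  sSup {r : ℝ | ∃ w : Fin n → ℝ, (∀ i, 0 < w i) ∧ ∑ i, w i = 1 ∧
      ∑ i, w i • x i = 0 ∧ r = ∏ i, ((n : ℝ) * w i)}

/-!
Fix a finite `δ`-net `T` of the unit sphere with `log |T| = O(p log p)`. For a unit vector `v`,
independence and the directional condition give `P(⟪v, Xᵢ⟫ < ε for all i) ≤ rⁿ`, so with
probability at least `1 - |T| rⁿ` every `v ∈ T` has some `⟪v, Xᵢ⟫ ≥ ε`. Since `‖Xᵢ‖ ≤ M √p`, the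
net passes this to every unit vector with `ε/2` in place of `ε`, and Hahn–Banach then puts the
ball of radius `ε/2` inside the convex hull. The growth condition makes `|T| rⁿ → 0`, and
`EL_n > 0` as soon as `0` is interior, because then `0` has a representation with positive
weights.
-/

section ConvexHull

variable {ι E : Type*} [Fintype ι] [AddCommGroup E] [Module ℝ E]

lemma exists_weights_of_mem_convexHull_range {v : ι → E} {x : E}
    (hx : x ∈ convexHull ℝ (Set.range v)) :
    ∃ w : ι → ℝ, (∀ i, 0 ≤ w i) ∧ ∑ i, w i = 1 ∧ ∑ i, w i • v i = x := by
  classical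
  rw [convexHull_range_eq_exists_affineCombination] at hx
  obtain ⟨s, w, hw₀, hw₁, rfl⟩ := hx
  refine ⟨fun i => if i ∈ s then w i else 0, fun i => ?_, ?_, ?_⟩
  · dsimp only
    split_ifs with hi
    exacts [hw₀ i hi, le_rfl]
  · rwa [Finset.sum_ite_mem, Finset.univ_inter]
  · simp only [ite_smul, zero_smul, Finset.sum_ite_mem, Finset.univ_inter]
    exact (s.affineCombination_eq_linear_combination v w hw₁).symm

variable [TopologicalSpace E] [IsTopologicalAddGroup E] [ContinuousSMul ℝ E]

/-- Pushing `x` slightly away from the centroid `c` stays in the hull; writing `x` as a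
mixture of that point and `c` makes every weight positive. -/
lemma exists_pos_weights_of_mem_interior_convexHull_range {v : ι → E} {x : E}
    (hx : x ∈ interior (convexHull ℝ (Set.range v))) :
    ∃ w : ι → ℝ, (∀ i, 0 < w i) ∧ ∑ i, w i = 1 ∧ ∑ i, w i • v i = x := by
  have : Nonempty ι := Set.range_nonempty_iff_nonempty.mp <|
    convexHull_nonempty_iff.mp ⟨x, interior_subset hx⟩
  set N : ℝ := (Fintype.card ι : ℝ)
  have hN : 0 < N := Nat.cast_pos.mpr Fintype.card_pos
  set c : E := N⁻¹ • ∑ i, v i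
  have hpath : Continuous fun t : ℝ => x + t • (x - c) := by fun_prop
  have hnear : ∀ᶠ t in nhdsWithin (0 : ℝ) (Set.Ioi 0),
      x + t • (x - c) ∈ convexHull ℝ (Set.range v) := by
    refine nhdsWithin_le_nhds (hpath.continuousAt ?_)
    simpa using mem_interior_iff_mem_nhds.mp hx
  obtain ⟨t, hyt, ht : 0 < t⟩ := (hnear.and self_mem_nhdsWithin).exists
  obtain ⟨u, hu₀, hu₁, hu⟩ := exists_weights_of_mem_convexHull_range hyt
  refine ⟨fun i => (u i + t / N) / (1 + t), fun i => by have := hu₀ i; positivity, ?_, ?_⟩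
  · rw [← Finset.sum_div, Finset.sum_add_distrib, hu₁, Finset.sum_const, Finset.card_univ,
      nsmul_eq_mul]
    field_simp
    ring
  · have hc : (t / N) • ∑ i, v i = t • c := by simp only [c, smul_smul, div_eq_mul_inv]
    have key : ∑ i, (u i + t / N) • v i = (1 + t) • x := by
      calc ∑ i, (u i + t / N) • v i = ∑ i, u i • v i + (t / N) • ∑ i, v i := by
            simp only [add_smul, Finset.sum_add_distrib, Finset.smul_sum]
        _ = (1 + t) • x := by rw [hu, hc, smul_sub, add_smul, one_smul]; abel
    calc ∑ i, ((u i + t / N) / (1 + t)) • v i = (1 + t)⁻¹ • ∑ i, (u i + t / N) • v i := by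
          simp only [div_eq_inv_mul, mul_smul, Finset.smul_sum]
      _ = x := by rw [key, inv_smul_smul₀ (by positivity)]

end ConvexHull

lemma bddAbove_ELval_set (p n : ℕ) (x : Fin n → EuclideanSpace ℝ (Fin p)) :
    BddAbove {r : ℝ | ∃ w : Fin n → ℝ, (∀ i, 0 < w i) ∧ ∑ i, w i = 1 ∧
      ∑ i, w i • x i = 0 ∧ r = ∏ i, ((n : ℝ) * w i)} := by
  refine ⟨(n : ℝ) ^ n, ?_⟩
  rintro _ ⟨w, hw₀, hw₁, -, rfl⟩
  have hle : ∀ i ∈ Finset.univ, (n : ℝ) * w i ≤ n := fun i _ => by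
    have := hw₁ ▸ Finset.single_le_sum (fun j _ => (hw₀ j).le) (Finset.mem_univ i)
    exact mul_le_of_le_one_right n.cast_nonneg this
  calc ∏ i, (n : ℝ) * w i ≤ ∏ _i : Fin n, (n : ℝ) :=
        Finset.prod_le_prod (fun i _ => by have := hw₀ i; positivity) hle
    _ = (n : ℝ) ^ n := by simp

lemma ELval_pos_of_zero_mem_interior {p n : ℕ} {x : Fin n → EuclideanSpace ℝ (Fin p)}
    (h : 0 ∈ interior (convexHull ℝ (Set.range x))) : 0 < ELval p n x := by
  obtain ⟨w, hw₀, hw₁, hw⟩ := exists_pos_weights_of_mem_interior_convexHull_range h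
  have hprod : 0 < ∏ i, ((n : ℝ) * w i) :=
    Finset.prod_pos fun i _ => mul_pos (Nat.cast_pos.mpr i.pos) (hw₀ i)
  exact hprod.trans_le (le_csSup (bddAbove_ELval_set p n x) ⟨w, hw₀, hw₁, hw, rfl⟩)

section Geometry

variable {E : Type*} [NormedAddCommGroup E] [InnerProductSpace ℝ E]

lemma ball_subset_of_forall_exists_inner_ge [CompleteSpace E] {C : Set E} (hconv : Convex ℝ C)
    (hcl : IsClosed C) (hne : C.Nonempty) {ρ : ℝ}
    (h : ∀ u : E, ‖u‖ = 1 → ∃ y ∈ C, ρ ≤ ⟪u, y⟫) :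
    Metric.ball 0 ρ ⊆ C := by
  intro x hx
  by_contra hxC
  obtain ⟨f, s, hfC, hfx⟩ := geometric_hahn_banach_closed_point hconv hcl hxC
  set w := (InnerProductSpace.toDual ℝ E).symm f
  have hw : ∀ y, ⟪w, y⟫ = f y := fun y => InnerProductSpace.toDual_symm_apply
  obtain ⟨y₀, hy₀⟩ := hne
  have hw₀ : w ≠ 0 := fun h₀ => by
    have := hfC y₀ hy₀
    simp only [← hw, h₀, inner_zero_left] at this hfx
    linarith
  obtain ⟨y, hyC, hy⟩ := h (‖w‖⁻¹ • w) (norm_smul_inv_norm hw₀)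
  rw [real_inner_smul_left, le_inv_mul_iff₀ (norm_pos_iff.mpr hw₀)] at hy
  have hx' : ‖x‖ < ρ := by simpa using hx
  have := mul_lt_mul_of_pos_left hx' (norm_pos_iff.mpr hw₀)
  linarith [hfC y hyC, hw x, hw y, real_inner_le_norm w x]

lemma exists_inner_ge_of_net {ι : Type*} {x : ι → E} {R : ℝ} (hx : ∀ i, ‖x i‖ ≤ R)
    {T : Set E} {η : ℝ} (hT : ∀ u : E, ‖u‖ = 1 → ∃ v ∈ T, ‖u - v‖ ≤ η)
    {ρ : ℝ} (hρ : ∀ v ∈ T, ∃ i, ρ ≤ ⟪v, x i⟫) {u : E} (hu : ‖u‖ = 1) :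
    ∃ i, ρ - η * R ≤ ⟪u, x i⟫ := by
  obtain ⟨v, hvT, huv⟩ := hT u hu
  obtain ⟨i, hi⟩ := hρ v hvT
  refine ⟨i, ?_⟩
  have hdiff : ⟪v - u, x i⟫ ≤ η * R := (real_inner_le_norm _ _).trans <|
    mul_le_mul (norm_sub_rev v u ▸ huv) (hx i) (norm_nonneg _) ((norm_nonneg _).trans huv)
  rw [inner_sub_left] at hdiff
  linarith

lemma zero_mem_interior_convexHull_of_net [FiniteDimensional ℝ E] {ι : Type*} [Finite ι]
    [Nonempty ι] {x : ι → E} {R : ℝ} (hx : ∀ i, ‖x i‖ ≤ R)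
    {T : Set E} {η : ℝ} (hT : ∀ u : E, ‖u‖ = 1 → ∃ v ∈ T, ‖u - v‖ ≤ η)
    {ρ : ℝ} (hρ : ∀ v ∈ T, ∃ i, ρ ≤ ⟪v, x i⟫) (hηR : η * R < ρ) :
    0 ∈ interior (convexHull ℝ (Set.range x)) := by
  have hball : Metric.ball 0 (ρ - η * R) ⊆ convexHull ℝ (Set.range x) := by
    refine ball_subset_of_forall_exists_inner_ge (convex_convexHull ℝ _)
      ((Set.finite_range x).isClosed_convexHull (𝕜 := ℝ)) ((Set.range_nonempty x).convexHull) ?_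
    intro u hu
    obtain ⟨i, hi⟩ := exists_inner_ge_of_net hx hT hρ hu
    exact ⟨x i, subset_convexHull ℝ _ ⟨i, rfl⟩, hi⟩
  exact interior_maximal hball Metric.isOpen_ball (Metric.mem_ball_self (by linarith))

end Geometry

lemma exists_finset_subset_forall_dist_le_two_mul {X : Type*} [PseudoMetricSpace X]
    {s : Set X} {T : Finset X} {δ : ℝ} (hT : ∀ x ∈ s, ∃ v ∈ T, dist x v ≤ δ) :
    ∃ T' : Finset X, ↑T' ⊆ s ∧ T'.card ≤ T.card ∧ ∀ x ∈ s, ∃ v ∈ T', dist x v ≤ 2 * δ := by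
  classical
  let near : X → Prop := fun v => ∃ y ∈ s, dist y v ≤ δ
  let g : X → X := fun v => if h : near v then h.choose else v
  have hg : ∀ v, near v → g v ∈ s ∧ dist (g v) v ≤ δ := fun v h => by
    simpa only [g, dif_pos h] using h.choose_spec
  refine ⟨(T.filter near).image g, ?_, Finset.card_image_le.trans (Finset.card_filter_le _ _), ?_⟩
  · intro y hy
    obtain ⟨v, hv, rfl⟩ := Finset.mem_image.mp hy
    exact (hg v (Finset.mem_filter.mp hv).2).1
  · intro x hx
    obtain ⟨v, hvT, hxv⟩ := hT x hx
    have hv : near v := ⟨x, hx, hxv⟩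
    refine ⟨g v, Finset.mem_image_of_mem g (Finset.mem_filter.mpr ⟨hvT, hv⟩), ?_⟩
    calc dist x (g v) ≤ dist x v + dist (g v) v := dist_triangle_right _ _ _
      _ ≤ 2 * δ := by linarith [(hg v hv).2]

namespace EuclideanSpace

lemma norm_le_sqrt_card_mul {p : ℕ} {y : EuclideanSpace ℝ (Fin p)} {c : ℝ}
    (hc : 0 ≤ c) (hy : ∀ j, |y j| ≤ c) : ‖y‖ ≤ √p * c := by
  rw [EuclideanSpace.norm_eq, ← Real.sqrt_sq hc, ← Real.sqrt_mul p.cast_nonneg]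
  refine Real.sqrt_le_sqrt ?_
  calc ∑ j, ‖y j‖ ^ 2 ≤ ∑ _j : Fin p, c ^ 2 := Finset.sum_le_sum fun j _ => by
        rw [Real.norm_eq_abs]
        exact pow_le_pow_left₀ (abs_nonneg _) (hy j) 2
    _ = p * c ^ 2 := by simp

lemma exists_finset_card_le_forall_dist_le (p : ℕ) {h : ℝ} (hh : 0 < h) :
    ∃ T : Finset (EuclideanSpace ℝ (Fin p)), (T.card : ℝ) ≤ (2 / h + 3) ^ p ∧
      ∀ u ∈ Metric.closedBall 0 1, ∃ v ∈ T, dist u v ≤ √p * h := by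
  set K : ℕ := ⌈1 / h⌉₊
  have hK : (K : ℝ) < 1 / h + 1 := Nat.ceil_lt_add_one (by positivity)
  have hK' : 1 / h ≤ K := Nat.le_ceil _
  let grid : (Fin p → ℤ) → EuclideanSpace ℝ (Fin p) := fun z => WithLp.toLp 2 fun j => h * z j
  refine ⟨(Fintype.piFinset fun _ => Finset.Icc (-(K : ℤ)) K).image grid, ?_, ?_⟩
  · have hcard : ((Fintype.piFinset fun _ : Fin p => Finset.Icc (-(K : ℤ)) K).card : ℝ)
        = (2 * K + 1) ^ p := by
      rw [Fintype.card_piFinset, Finset.prod_const, Int.card_Icc, Finset.card_univ,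
        Fintype.card_fin]
      have : ((K : ℤ) + 1 - -(K : ℤ)).toNat = 2 * K + 1 := by omega
      rw [this]
      push_cast
      ring
    calc _ ≤ ((Fintype.piFinset fun _ : Fin p => Finset.Icc (-(K : ℤ)) K).card : ℝ) :=
          Nat.cast_le.mpr Finset.card_image_le
      _ ≤ (2 / h + 3) ^ p := by
          rw [hcard]
          exact pow_le_pow_left₀ (by positivity) (by rw [div_eq_mul_one_div]; linarith) p
  · intro u hu
    have hu1 : ∀ j, |u j| ≤ 1 := fun j =>
      (PiLp.norm_apply_le u j).trans (mem_closedBall_zero_iff.mp hu)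
    set z : Fin p → ℤ := fun j => ⌊u j / h⌋
    refine ⟨grid z, Finset.mem_image_of_mem grid (Fintype.mem_piFinset.mpr fun j => ?_), ?_⟩
    · have hj : |u j / h| ≤ K := by
        rw [abs_div, abs_of_pos hh, div_le_iff₀ hh]
        exact (hu1 j).trans (by rwa [div_le_iff₀ hh] at hK')
      rw [Finset.mem_Icc]
      constructor
      · exact Int.le_floor.mpr (by push_cast; linarith [(abs_le.mp hj).1])
      · exact Int.cast_le.mp ((Int.floor_le _).trans (by push_cast; linarith [(abs_le.mp hj).2]))
    · rw [dist_eq_norm]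
      refine norm_le_sqrt_card_mul hh.le fun j => ?_
      have hfract : u j - h * z j = h * Int.fract (u j / h) := by
        rw [Int.fract, mul_sub, mul_div_cancel₀ _ hh.ne']
      simp only [grid, PiLp.sub_apply]
      rw [hfract, abs_of_nonneg (mul_nonneg hh.le (Int.fract_nonneg _))]
      exact mul_le_of_le_one_right hh.le (Int.fract_lt_one _).le

lemma exists_finset_subset_sphere_forall_dist_le (p : ℕ) {h : ℝ} (hh : 0 < h) :
    ∃ T : Finset (EuclideanSpace ℝ (Fin p)),
      ↑T ⊆ Metric.sphere (0 : EuclideanSpace ℝ (Fin p)) 1 ∧ (T.card : ℝ) ≤ (2 / h + 3) ^ p ∧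
      ∀ u ∈ Metric.sphere 0 1, ∃ v ∈ T, dist u v ≤ 2 * (√p * h) := by
  obtain ⟨T, hTcard, hT⟩ := exists_finset_card_le_forall_dist_le p hh
  obtain ⟨T', hT's, hT'card, hT'⟩ := exists_finset_subset_forall_dist_le_two_mul
    fun u hu => hT u (Metric.sphere_subset_closedBall hu)
  exact ⟨T', hT's, (Nat.cast_le.mpr hT'card).trans hTcard, hT'⟩

end EuclideanSpace

section Probability

variable {Ω : Type*} [MeasurableSpace Ω] {P : Measure Ω}

lemma ProbabilityTheory.iIndepFun.measure_iInter_preimage_le_pow {ι β : Type*} [Fintype ι]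
    [MeasurableSpace β] {Y : ι → Ω → β} (hindep : iIndepFun Y P) {S : Set β} (hS : MeasurableSet S) {a : ℝ≥0∞}
    (ha : ∀ i, P (Y i ⁻¹' S) ≤ a) :
    P (⋂ i, Y i ⁻¹' S) ≤ a ^ Fintype.card ι := by
  rw [hindep.meas_iInter fun i => ⟨S, hS, rfl⟩]
  calc ∏ i, P (Y i ⁻¹' S) ≤ ∏ _i : ι, a := Finset.prod_le_prod' fun i _ => ha i
    _ = a ^ Fintype.card ι := by simp

lemma measure_zero_notMem_interior_convexHull_le {ι : Type*} [Fintype ι] [Nonempty ι] {q : ℕ}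
    {Y : ι → Ω → EuclideanSpace ℝ (Fin q)} (hindep : iIndepFun Y P) {ε r M : ℝ}
    (hε : 0 < ε) (hM : 0 < M)
    (hdir : ∀ i (u : EuclideanSpace ℝ (Fin q)), ‖u‖ = 1 →
      P {ω | -ε < ⟪u, Y i ω⟫} ≤ ENNReal.ofReal r)
    (hbdd : ∀ i j, ∀ᵐ ω ∂P, |Y i ω j| ≤ M) :
    P {ω | (0 : EuclideanSpace ℝ (Fin q)) ∉ interior (convexHull ℝ (Set.range fun i => Y i ω))}
      ≤ ENNReal.ofReal (((8 * M / ε + 3) * (q + 1)) ^ q) * ENNReal.ofReal r ^ Fintype.card ι := by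
  -- The grid spacing that keeps the net error `2 q h M` below `ε / 2`.
  set h : ℝ := ε / (4 * M * (q + 1)) with hdef
  have hh : 0 < h := by positivity
  obtain ⟨T, hTs, hTcard, hT⟩ := EuclideanSpace.exists_finset_subset_sphere_forall_dist_le q hh
  have hTnorm : ∀ v ∈ T, ‖v‖ = 1 := fun v hv => mem_sphere_zero_iff_norm.mp (hTs hv)
  set S : EuclideanSpace ℝ (Fin q) → Set (EuclideanSpace ℝ (Fin q)) :=
    fun v => {y | -ε < ⟪-v, y⟫}
  have hbad : ∀ᵐ ω ∂P, (0 : EuclideanSpace ℝ (Fin q)) ∉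
      interior (convexHull ℝ (Set.range fun i => Y i ω)) → ω ∈ ⋃ v ∈ T, ⋂ i, Y i ⁻¹' S v := by
    filter_upwards [ae_all_iff.mpr fun i => ae_all_iff.mpr (hbdd i)] with ω hω hout
    by_contra hgood
    simp only [S, Set.mem_iUnion, Set.mem_iInter, Set.mem_preimage, Set.mem_ofPred_eq,
      inner_neg_left, not_exists, not_forall, not_lt, neg_le_neg_iff] at hgood
    refine hout (zero_mem_interior_convexHull_of_net
      (fun i => EuclideanSpace.norm_le_sqrt_card_mul hM.le (hω i)) (T := T) (η := 2 * (√q * h))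
      (fun u hu => ?_) hgood ?_)
    · obtain ⟨v, hvT, huv⟩ := hT u (mem_sphere_zero_iff_norm.mpr hu)
      exact ⟨v, hvT, dist_eq_norm u v ▸ huv⟩
    · have hsq : √(q : ℝ) * √q = q := Real.mul_self_sqrt q.cast_nonneg
      calc 2 * (√q * h) * (√q * M) = 2 * (√q * √q) * M * h := by ring
        _ = ε * q / (2 * (q + 1)) := by rw [hsq, hdef]; field_simp; ring
        _ < ε := by rw [div_lt_iff₀ (by positivity)]; nlinarith
  have hcard : (T.card : ℝ≥0∞) ≤ ENNReal.ofReal (((8 * M / ε + 3) * (q + 1)) ^ q) := by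
    rw [← ENNReal.ofReal_natCast]
    refine ENNReal.ofReal_le_ofReal (hTcard.trans (pow_le_pow_left₀ (by positivity) ?_ q))
    have h2 : 2 / h = 8 * M / ε * (q + 1) := by rw [hdef]; field_simp; ring
    rw [h2]
    nlinarith [q.cast_nonneg (α := ℝ)]
  calc _ ≤ P (⋃ v ∈ T, ⋂ i, Y i ⁻¹' S v) := measure_mono_ae hbad
    _ ≤ ∑ v ∈ T, P (⋂ i, Y i ⁻¹' S v) := measure_biUnion_finset_le _ _
    _ ≤ ∑ _v ∈ T, ENNReal.ofReal r ^ Fintype.card ι := Finset.sum_le_sum fun v hv =>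
        hindep.measure_iInter_preimage_le_pow
          (measurableSet_lt measurable_const (by fun_prop))
          fun i => hdir i (-v) (by rw [norm_neg, hTnorm v hv])
    _ ≤ _ := by
        rw [Finset.sum_const, nsmul_eq_mul]
        gcongr

end Probability

lemma Real.mul_log_mul_add_one_le {C x : ℝ} (hC : 1 ≤ C) (hx : 0 ≤ x) :
    x * Real.log (C * (x + 1)) ≤ (Real.log C + 1) * (1 + x * Real.log x) := by
  have hlogC : 0 ≤ Real.log C := Real.log_nonneg hC
  rcases hx.eq_or_lt with rfl | hx
  · simp only [zero_mul, zero_add, mul_one]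
    linarith
  have hself : x ≤ 1 + x * Real.log x := by
    nlinarith [Real.one_sub_inv_le_log_of_pos hx, mul_inv_cancel₀ hx.ne']
  have hsucc : x * Real.log (x + 1) ≤ x * Real.log x + 1 := by
    have h1 : Real.log (x + 1) = Real.log x + Real.log (1 + x⁻¹) := by
      rw [← Real.log_mul hx.ne' (by positivity), mul_add, mul_one, mul_inv_cancel₀ hx.ne']
    have h2 := Real.log_le_sub_one_of_pos (by positivity : 0 < 1 + x⁻¹)
    rw [h1, mul_add]
    nlinarith [mul_inv_cancel₀ hx.ne']
  rw [Real.log_mul (by linarith) (by linarith), mul_add]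
  nlinarith [mul_le_mul_of_nonneg_left hself hlogC]

/-- The growth condition makes `p log (C(p+1)) = o(n)`, so the `n log r` term wins. -/
lemma tendsto_mul_add_one_pow_mul_pow {p : ℕ → ℕ}
    (hgrowth : Tendsto (fun n => (p n : ℝ) * Real.log (p n) / n) atTop (nhds 0))
    {C r : ℝ} (hC : 1 ≤ C) (hr₀ : 0 < r) (hr₁ : r < 1) :
    Tendsto (fun n => (C * (p n + 1)) ^ p n * r ^ n) atTop (nhds 0) := by
  set a : ℕ → ℝ := fun n => p n * Real.log (C * (p n + 1))
  have ha : Tendsto (fun n => a n / n) atTop (nhds 0) := by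
    have hbound : Tendsto (fun n : ℕ => (Real.log C + 1) * (1 / n + p n * Real.log (p n) / n))
        atTop (nhds 0) := by
      simpa using (tendsto_one_div_atTop_nhds_zero_nat.add hgrowth).const_mul (Real.log C + 1)
    have hCp : ∀ n, 1 ≤ C * (p n + 1) := fun n =>
      one_le_mul_of_one_le_of_one_le hC (by linarith [(p n).cast_nonneg (α := ℝ)])
    refine squeeze_zero (fun n => div_nonneg (mul_nonneg (p n).cast_nonneg
      (Real.log_nonneg (hCp n))) n.cast_nonneg) (fun n => ?_) hbound
    calc a n / n ≤ (Real.log C + 1) * (1 + p n * Real.log (p n)) / n :=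
          div_le_div_of_nonneg_right (Real.mul_log_mul_add_one_le hC (p n).cast_nonneg)
            n.cast_nonneg
      _ = _ := by ring
  have hexp : Tendsto (fun n : ℕ => (n : ℝ) * (a n / n + Real.log r)) atTop atBot :=
    Tendsto.atTop_mul_neg (Real.log_neg hr₀ hr₁) tendsto_natCast_atTop_atTop
      (by simpa using ha.add_const (Real.log r))
  refine (Real.tendsto_exp_atBot.comp hexp).congr' ?_
  filter_upwards [eventually_ne_atTop 0] with n hn
  rw [Function.comp_apply, mul_add, mul_div_cancel₀ _ (Nat.cast_ne_zero.mpr hn), Real.exp_add]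
  simp only [a]
  rw [← Real.log_pow, ← Real.log_pow, Real.exp_log (by positivity), Real.exp_log (by positivity)]

lemma tendsto_measure_setOf_one_of_not {Ω α : Type*} [MeasurableSpace Ω] {P : Measure Ω}
    [IsProbabilityMeasure P] {l : Filter α} {Q : α → Ω → Prop}
    (h : Tendsto (fun a => P {ω | ¬ Q a ω}) l (nhds 0)) :
    Tendsto (fun a => P {ω | Q a ω}) l (nhds 1) := by
  have hlow : Tendsto (fun a => 1 - P {ω | ¬ Q a ω}) l (nhds 1) := by
    simpa using ENNReal.Tendsto.sub tendsto_const_nhds h (Or.inl ENNReal.one_ne_top)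
  refine tendsto_of_tendsto_of_tendsto_of_le_of_le hlow tendsto_const_nhds (fun a => ?_)
    fun a => prob_le_one
  have := measure_univ_le_add_compl (μ := P) {ω | Q a ω}
  rw [measure_univ, Set.compl_ofPred] at this
  exact tsub_le_iff_right.mpr this

theorem zero_in_convex_hull_bounded_case_general
    {Ω : Type*} [MeasurableSpace Ω] (P : Measure Ω) [IsProbabilityMeasure P]
    (p : ℕ → ℕ)
    (X : (n : ℕ) → Fin n → Ω → EuclideanSpace ℝ (Fin (p n)))
    (hindep : ∀ n, iIndepFun (X n) P)
    (ε r : ℝ) (hε : 0 < ε) (hr : r < 1)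
    (hdir : ∀ n (i : Fin n) (u : EuclideanSpace ℝ (Fin (p n))), ‖u‖ = 1 →
      P {ω | -ε < ⟪u, X n i ω⟫} ≤ ENNReal.ofReal r)
    (M : ℝ)
    (hbdd : ∀ n (i : Fin n) (j : Fin (p n)), ∀ᵐ ω ∂P, |X n i ω j| ≤ M)
    (hgrowth : Tendsto (fun n => (p n : ℝ) * Real.log (p n) / (n : ℝ))
      atTop (nhds 0)) :
    Tendsto (fun n => P {ω | (0 : EuclideanSpace ℝ (Fin (p n)))
        ∈ interior (convexHull ℝ (Set.range fun i : Fin n => X n i ω))})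
      atTop (nhds 1)
    ∧ Tendsto (fun n => P {ω | ELval (p n) n (fun i => X n i ω) = 0})
      atTop (nhds 0) := by
  set M' := max M 1
  set r' := max r (1 / 2)
  have hM' : 0 < M' := lt_max_of_lt_right one_pos
  have hr'₀ : 0 < r' := lt_max_of_lt_right one_half_pos
  have hbound : Tendsto (fun n => ENNReal.ofReal (((8 * M' / ε + 3) * (p n + 1)) ^ p n) *
      ENNReal.ofReal r' ^ n) atTop (nhds 0) := by
    have := ENNReal.tendsto_ofReal <| tendsto_mul_add_one_pow_mul_pow hgrowth
      (C := 8 * M' / ε + 3) (by linarith [show 0 ≤ 8 * M' / ε by positivity]) hr'₀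
      (max_lt hr one_half_lt_one)
    rw [ENNReal.ofReal_zero] at this
    refine this.congr fun n => ?_
    rw [ENNReal.ofReal_mul (by positivity), ENNReal.ofReal_pow hr'₀.le]
  have hbad : Tendsto (fun n => P {ω | (0 : EuclideanSpace ℝ (Fin (p n))) ∉
      interior (convexHull ℝ (Set.range fun i : Fin n => X n i ω))}) atTop (nhds 0) := by
    refine tendsto_of_tendsto_of_tendsto_of_le_of_le' tendsto_const_nhds hbound
      (.of_forall fun _ => bot_le) ?_
    filter_upwards [eventually_ne_atTop 0] with n hn
    have : Nonempty (Fin n) := Fin.pos_iff_nonempty.mp (Nat.pos_of_ne_zero hn)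
    simpa using measure_zero_notMem_interior_convexHull_le (r := r') (hindep n) hε hM'
      (fun i u hu => (hdir n i u hu).trans (ENNReal.ofReal_le_ofReal (le_max_left _ _)))
      (fun i j => (hbdd n i j).mono fun ω h => h.trans (le_max_left _ _))
  refine ⟨tendsto_measure_setOf_one_of_not hbad, tendsto_of_tendsto_of_tendsto_of_le_of_le
    tendsto_const_nhds hbad (fun _ => bot_le) fun n => measure_mono fun ω hω hin => ?_⟩
  exact (ELval_pos_of_zero_mem_interior hin).ne' hω

/-- **Lemma 4.2(a).**
Triangular array of i.i.d. random vectors in `ℝ^{pₙ}`.  Suppose there exist `ε > 0`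
and `r < 1` such that `P{uᵀ X_{n,1} > −ε} ≤ r` for every unit vector `u` and every
`n`, and the components `|X_{n,i,j}|` are uniformly bounded.  If `(pₙ log pₙ)/n → 0`,
then the probability that `0` lies in the interior of the convex hull of
`{X_{n,1}, …, X_{n,n}}` tends to one; equivalently, `P{ELₙ = 0} → 0`
(condition (D0)). -/
theorem zero_in_convex_hull_bounded_case
    {Ω : Type*} [MeasurableSpace Ω] (P : Measure Ω) [IsProbabilityMeasure P]
    (p : ℕ → ℕ)
    (X : (n : ℕ) → Fin n → Ω → EuclideanSpace ℝ (Fin (p n)))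
    (hXmeas : ∀ n i, Measurable (X n i))
    (hindep : ∀ n, iIndepFun (X n) P)
    (hident : ∀ n, ∀ i j : Fin n, IdentDistrib (X n i) (X n j) P P)
    (ε r : ℝ) (hε : 0 < ε) (hr : r < 1)
    (hdir : ∀ n (i : Fin n) (u : EuclideanSpace ℝ (Fin (p n))), ‖u‖ = 1 →
      P {ω | -ε < ⟪u, X n i ω⟫} ≤ ENNReal.ofReal r)
    (M : ℝ)
    (hbdd : ∀ n (i : Fin n) (j : Fin (p n)), ∀ᵐ ω ∂P, |X n i ω j| ≤ M)
    (hgrowth : Tendsto (fun n => (p n : ℝ) * Real.log (p n) / (n : ℝ))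
      atTop (nhds 0)) :
    Tendsto (fun n => P {ω | (0 : EuclideanSpace ℝ (Fin (p n)))
        ∈ interior (convexHull ℝ (Set.range fun i : Fin n => X n i ω))})
      atTop (nhds 1)
    ∧ Tendsto (fun n => P {ω | ELval (p n) n (fun i => X n i ω) = 0})
      atTop (nhds 0) :=
  zero_in_convex_hull_bounded_case_general P p X hindep ε r hε hr hdir M hbdd hgrowth
end

section
/- Suppose there exist ε > 0 and r < 1 such that P{u^T X_{n,1} > −ε} ≤ r for every unit vector u ∈ ℝ^{p_n} and every n, and that condition (D7) holds: for some q > 2, sup_n max_{i≤n} E‖X_{n,i}/p_n^{1/2}‖^q < ∞ and p_n^{3+6/(q−2)}/n → 0. Then P{0 lies in the interior of the convex hull of {X_{n,1}, …, X_{n,n}} in ℝ^{p_n}} → 1; equivalently, P{EL_n = 0} → 0 (condition (D0)). -/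
open MeasureTheory ProbabilityTheory Filter
open scoped ENNReal NNReal RealInnerProductSpace BigOperators

/-!
If `0` is not interior to the convex hull of `X₁, …, Xₙ`, a unit vector `u` has `⟪u, Xᵢ⟫ ≥ 0`
for all `i`. When moreover every `‖Xᵢ‖ ≤ T`, the nearest point `v` of a fixed `ε / (2T)`-net of
the unit sphere still has `⟪v, Xᵢ⟫ > -ε` for all `i`, an event of probability at most `rⁿ` by
independence. A coordinate grid gives such a net with `(C n²)ᵖ` points for `T = n^{2/q} √p`,
and Markov's inequality for the `q`-th moments bounds `P(maxᵢ ‖Xᵢ‖ > T)` by `M / n`.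
By (D7) `p ≤ n^{1/3}` eventually, so `(C n²)ᵖ rⁿ → 0`. Finally `ELₙ > 0` as soon as `0` is
interior to the hull, since then strictly positive weights balance the `Xᵢ`.
-/

open Set Topology

section ConvexGeometry

variable {E : Type*} [NormedAddCommGroup E] [InnerProductSpace ℝ E] [FiniteDimensional ℝ E]

theorem exists_norm_eq_one_inner_nonneg_of_zero_notMem_interior_convexHull {s : Set E}
    (hs : s.Nonempty) (h : (0 : E) ∉ interior (convexHull ℝ s)) :
    ∃ u : E, ‖u‖ = 1 ∧ ∀ x ∈ s, 0 ≤ ⟪u, x⟫ := by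
  suffices ∃ y : E, y ≠ 0 ∧ ∀ x ∈ s, 0 ≤ ⟪y, x⟫ by
    obtain ⟨y, hy0, hy⟩ := this
    refine ⟨‖y‖⁻¹ • y, norm_smul_inv_norm hy0, fun x hx => ?_⟩
    rw [real_inner_smul_left]
    exact mul_nonneg (by positivity) (hy x hx)
  have hconv : Convex ℝ (convexHull ℝ s) := convex_convexHull ℝ s
  by_cases hint : (interior (convexHull ℝ s)).Nonempty
  · obtain ⟨f, hf0, hf⟩ := geometric_hahn_banach_of_nonempty_interior_point hconv h hint
    refine ⟨-(InnerProductSpace.toDual ℝ E).symm f, by simpa using hf0, fun x hx => ?_⟩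
    rw [inner_neg_left, InnerProductSpace.toDual_symm_apply, neg_nonneg]
    simpa using hf x (subset_convexHull ℝ s hx)
  · -- `s` lies in a proper affine subspace, on which a normal vector has constant inner product
    obtain ⟨x₀, hx₀⟩ := hs
    have hdir : (affineSpan ℝ s).direction ≠ ⊤ := by
      rwa [Ne, AffineSubspace.direction_eq_top_iff_of_nonempty ⟨x₀, subset_affineSpan ℝ s hx₀⟩,
        ← affineSpan_convexHull, ← hconv.interior_nonempty_iff_affineSpan_eq_top]
    obtain ⟨y, hy, hy0⟩ := Submodule.exists_mem_ne_zero_of_ne_bot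
      (mt Submodule.orthogonal_eq_bot_iff.mp hdir)
    have hconst : ∀ x ∈ s, ⟪y, x⟫ = ⟪y, x₀⟫ := fun x hx => by
      have := (Submodule.mem_orthogonal' _ _).mp hy (x - x₀)
        (AffineSubspace.vsub_mem_direction (subset_affineSpan ℝ s hx)
          (subset_affineSpan ℝ s hx₀))
      rw [inner_sub_right] at this
      linarith
    rcases le_total 0 ⟪y, x₀⟫ with hy₀ | hy₀
    · exact ⟨y, hy0, fun x hx => (hconst x hx).symm ▸ hy₀⟩
    · refine ⟨-y, neg_ne_zero.mpr hy0, fun x hx => ?_⟩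
      rw [inner_neg_left, hconst x hx]
      linarith

theorem exists_forall_neg_lt_inner_of_zero_notMem_interior_convexHull {ι κ : Type*}
    [Nonempty ι] {x : ι → E} (h : (0 : E) ∉ interior (convexHull ℝ (range x))) {T δ ε : ℝ}
    (hx : ∀ i, ‖x i‖ ≤ T) {v : κ → E} (hv : ∀ u : E, ‖u‖ = 1 → ∃ k, ‖u - v k‖ ≤ δ)
    (hδT : δ * T < ε) : ∃ k, ∀ i, -ε < ⟪v k, x i⟫ := by
  obtain ⟨u, hu, hux⟩ :=
    exists_norm_eq_one_inner_nonneg_of_zero_notMem_interior_convexHull (range_nonempty x) h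
  obtain ⟨k, hk⟩ := hv u hu
  refine ⟨k, fun i => ?_⟩
  have hclose : |⟪v k - u, x i⟫| ≤ δ * T :=
    (abs_real_inner_le_norm _ _).trans <|
      mul_le_mul (norm_sub_rev u (v k) ▸ hk) (hx i) (norm_nonneg _) ((norm_nonneg _).trans hk)
  rw [inner_sub_left] at hclose
  linarith [(abs_le.mp hclose).1, hux (x i) (mem_range_self i)]

end ConvexGeometry

theorem zero_mem_interior_convexHull_of_subsingleton {E : Type*} [AddCommGroup E] [Module ℝ E]
    [TopologicalSpace E] [Subsingleton E] {s : Set E} (hs : s.Nonempty) :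
    (0 : E) ∈ interior (convexHull ℝ s) := by
  simp [hs.eq_univ]

section Weights

variable {E ι : Type*} [NormedAddCommGroup E] [NormedSpace ℝ E] [Fintype ι]

theorem exists_nonneg_weights_of_mem_convexHull_range {x : ι → E} {y : E}
    (hy : y ∈ convexHull ℝ (range x)) :
    ∃ a : ι → ℝ, (∀ i, 0 ≤ a i) ∧ ∑ i, a i = 1 ∧ ∑ i, a i • x i = y := by
  classical
  rw [convexHull_range_eq_exists_affineCombination] at hy
  obtain ⟨s, w, hw0, hw1, rfl⟩ := hy
  refine ⟨fun i => if i ∈ s then w i else 0, fun i => ?_, ?_, ?_⟩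
  · by_cases hi : i ∈ s <;> simp [hi, hw0]
  · rw [Finset.sum_ite_mem, Finset.univ_inter, hw1]
  · simp_rw [ite_smul, zero_smul]
    rw [Finset.sum_ite_mem, Finset.univ_inter, s.affineCombination_eq_linear_combination _ _ hw1]

theorem exists_pos_weights_of_zero_mem_interior_convexHull {x : ι → E}
    (h : (0 : E) ∈ interior (convexHull ℝ (range x))) :
    ∃ w : ι → ℝ, (∀ i, 0 < w i) ∧ ∑ i, w i = 1 ∧ ∑ i, w i • x i = 0 := by
  set σ := ∑ i, x i
  have hnear : ∀ᶠ t in 𝓝 (0 : ℝ), -t • σ ∈ convexHull ℝ (range x) :=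
    (continuous_neg.smul continuous_const).continuousAt.preimage_mem_nhds
      (by simpa using mem_interior_iff_mem_nhds.mp h)
  obtain ⟨t, ht, ht0⟩ := ((hnear.filter_mono nhdsWithin_le_nhds).and
    (self_mem_nhdsWithin : ∀ᶠ t in 𝓝[>] (0 : ℝ), 0 < t)).exists
  -- `-t • σ = ∑ aᵢ xᵢ` balances `∑ t • xᵢ`, so the weights `aᵢ + t` are positive and balanced
  obtain ⟨a, ha0, ha1, hax⟩ := exists_nonneg_weights_of_mem_convexHull_range ht
  have hN : 0 < 1 + Fintype.card ι * t := by positivity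
  refine ⟨fun i => (a i + t) / (1 + Fintype.card ι * t), fun i => by have := ha0 i; positivity,
    ?_, ?_⟩
  · rw [← Finset.sum_div, Finset.sum_add_distrib, ha1, Finset.sum_const, Finset.card_univ,
      nsmul_eq_mul, div_self hN.ne']
  · simp_rw [div_eq_inv_mul, ← smul_smul, add_smul]
    rw [← Finset.smul_sum, Finset.sum_add_distrib, hax, ← Finset.smul_sum, neg_smul,
      neg_add_cancel, smul_zero]

end Weights

theorem ELval_pos {p n : ℕ} {x : Fin n → EuclideanSpace ℝ (Fin p)}
    (h : (0 : EuclideanSpace ℝ (Fin p)) ∈ interior (convexHull ℝ (range x))) :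
    0 < ELval p n x := by
  obtain ⟨w, hw0, hw1, hwx⟩ := exists_pos_weights_of_zero_mem_interior_convexHull h
  have hbdd : BddAbove {r : ℝ | ∃ w : Fin n → ℝ, (∀ i, 0 < w i) ∧ ∑ i, w i = 1 ∧
      ∑ i, w i • x i = 0 ∧ r = ∏ i, ((n : ℝ) * w i)} := by
    refine ⟨∏ _i : Fin n, (n : ℝ), ?_⟩
    rintro _ ⟨v, hv0, hv1, -, rfl⟩
    refine Finset.prod_le_prod (fun i _ => by have := hv0 i; positivity) fun i _ => ?_
    have : v i ≤ 1 := hv1 ▸ Finset.single_le_sum (fun j _ => (hv0 j).le) (Finset.mem_univ i)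
    exact mul_le_of_le_one_right (Nat.cast_nonneg n) this
  refine lt_of_lt_of_le ?_ (le_csSup hbdd ⟨w, hw0, hw1, hwx, rfl⟩)
  exact Finset.prod_pos fun i _ => mul_pos (Nat.cast_pos.mpr (Fin.pos i)) (hw0 i)

theorem exists_fin_approx_of_abs_le_one {η : ℝ} (hη : 0 < η) :
    ∃ K : ℕ, (K : ℝ) ≤ 2 / η + 1 ∧
      ∃ g : Fin K → ℝ, ∀ t : ℝ, |t| ≤ 1 → ∃ m, |t - g m| ≤ η := by
  refine ⟨⌊2 / η⌋₊ + 1, by push_cast; linarith [Nat.floor_le (by positivity : 0 ≤ 2 / η)],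
    fun m => -1 + (m : ℕ) * η, fun t ht => ?_⟩
  obtain ⟨ht₁, ht₂⟩ := abs_le.mp ht
  refine ⟨⟨⌊(t + 1) / η⌋₊, Nat.lt_succ_of_le (Nat.floor_le_floor (by gcongr; linarith))⟩, ?_⟩
  have h₁ := Nat.floor_le (div_nonneg (by linarith : 0 ≤ t + 1) hη.le)
  have h₂ := Nat.lt_floor_add_one ((t + 1) / η)
  rw [le_div_iff₀ hη] at h₁
  rw [div_lt_iff₀ hη] at h₂
  rw [abs_le]
  constructor <;> nlinarith

theorem EuclideanSpace.norm_le_sqrt_card_mul_s13 {ι : Type*} [Fintype ι] {x : EuclideanSpace ℝ ι}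
    {η : ℝ} (hη : 0 ≤ η) (hx : ∀ j, |x j| ≤ η) : ‖x‖ ≤ √(Fintype.card ι) * η := by
  rw [← pow_le_pow_iff_left₀ (norm_nonneg x) (by positivity) two_ne_zero,
    EuclideanSpace.real_norm_sq_eq, mul_pow, Real.sq_sqrt (Nat.cast_nonneg _)]
  calc ∑ j, x j ^ 2 ≤ ∑ _j : ι, η ^ 2 :=
        Finset.sum_le_sum fun j _ => sq_le_sq' (abs_le.mp (hx j)).1 (abs_le.mp (hx j)).2
    _ = Fintype.card ι * η ^ 2 := by simp

theorem exists_grid_approx_of_norm_le_one (d : ℕ) {η : ℝ} (hη : 0 < η) :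
    ∃ K : ℕ, (K : ℝ) ≤ 2 / η + 1 ∧ ∃ g : (Fin d → Fin K) → EuclideanSpace ℝ (Fin d),
      ∀ u : EuclideanSpace ℝ (Fin d), ‖u‖ ≤ 1 → ∃ k, ‖u - g k‖ ≤ √d * η := by
  obtain ⟨K, hK, g, hg⟩ := exists_fin_approx_of_abs_le_one hη
  refine ⟨K, hK, fun k => WithLp.toLp 2 fun j => g (k j), fun u hu => ?_⟩
  choose m hm using fun j => hg (u j) ((Real.norm_eq_abs _ ▸ PiLp.norm_apply_le u j).trans hu)
  refine ⟨m, ?_⟩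
  simpa using
    EuclideanSpace.norm_le_sqrt_card_mul_s13 hη.le (x := u - WithLp.toLp 2 fun j => g (m j)) hm

theorem exists_two_mul_net_subset_of_net {X ι : Type*} [PseudoMetricSpace X] {s : Set X}
    (hs : s.Nonempty) {w : ι → X} {δ : ℝ} (hw : ∀ x ∈ s, ∃ k, dist x (w k) ≤ δ) :
    ∃ v : ι → X, (∀ k, v k ∈ s) ∧ ∀ x ∈ s, ∃ k, dist x (v k) ≤ 2 * δ := by
  have hchoice : ∀ k, ∃ y ∈ s, (∃ x ∈ s, dist x (w k) ≤ δ) → dist y (w k) ≤ δ := fun k => by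
    by_cases h : ∃ x ∈ s, dist x (w k) ≤ δ
    · obtain ⟨y, hy, hyk⟩ := h
      exact ⟨y, hy, fun _ => hyk⟩
    · exact ⟨hs.some, hs.some_mem, fun h' => absurd h' h⟩
  choose v hv hvw using hchoice
  refine ⟨v, hv, fun x hx => ?_⟩
  obtain ⟨k, hk⟩ := hw x hx
  exact ⟨k, by linarith [dist_triangle_right x (v k) (w k), hvw k ⟨x, hx, hk⟩]⟩

theorem exists_unit_sphere_net {d : ℕ} (hd : 0 < d) {δ : ℝ} (hδ : 0 < δ) :
    ∃ K : ℕ, (K : ℝ) ≤ 2 * √d / δ + 1 ∧ ∃ v : (Fin d → Fin K) → EuclideanSpace ℝ (Fin d),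
      (∀ k, ‖v k‖ = 1) ∧ ∀ u, ‖u‖ = 1 → ∃ k, ‖u - v k‖ ≤ 2 * δ := by
  have hsd : 0 < √(d : ℝ) := Real.sqrt_pos.mpr (by exact_mod_cast hd)
  obtain ⟨K, hK, g, hg⟩ := exists_grid_approx_of_norm_le_one d (div_pos hδ hsd)
  have hsphere : (Metric.sphere (0 : EuclideanSpace ℝ (Fin d)) 1).Nonempty :=
    ⟨EuclideanSpace.single ⟨0, hd⟩ 1, by simp⟩
  obtain ⟨v, hv, hvnet⟩ := exists_two_mul_net_subset_of_net hsphere (w := g) (δ := δ)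
    fun u hu => by
      simpa [dist_eq_norm, mul_div_cancel₀ _ hsd.ne'] using hg u (mem_sphere_zero_iff_norm.mp hu).le
  refine ⟨K, by rwa [div_div_eq_mul_div] at hK, v, fun k => mem_sphere_zero_iff_norm.mp (hv k),
    fun u hu => ?_⟩
  simpa [dist_eq_norm] using hvnet u (mem_sphere_zero_iff_norm.mpr hu)


theorem eventually_le_rpow_inv_of_tendsto_rpow_div {p : ℕ → ℕ} {s : ℝ} (hs : 0 < s)
    (h : Tendsto (fun n : ℕ => (p n : ℝ) ^ s / n) atTop (𝓝 0)) :
    ∀ᶠ n : ℕ in atTop, (p n : ℝ) ≤ (n : ℝ) ^ s⁻¹ := by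
  filter_upwards [h.eventually_lt_const one_pos, eventually_gt_atTop 0] with n hlt hn
  rw [div_lt_one (by exact_mod_cast hn)] at hlt
  calc (p n : ℝ) = ((p n : ℝ) ^ s) ^ s⁻¹ := (Real.rpow_rpow_inv (Nat.cast_nonneg _) hs.ne').symm
    _ ≤ (n : ℝ) ^ s⁻¹ := Real.rpow_le_rpow (by positivity) hlt.le (by positivity)

theorem tendsto_log_const_mul_pow_div_rpow {b C : ℝ} (hb : 0 < b) (hC : C ≠ 0) (k : ℕ) :
    Tendsto (fun x : ℝ => Real.log (C * x ^ k) / x ^ b) atTop (𝓝 0) := by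
  have hlog : (fun x : ℝ => Real.log C + k * Real.log x) =o[atTop] fun x => x ^ b :=
    ((Asymptotics.isLittleO_const_left.mpr (Or.inr
      (tendsto_norm_atTop_atTop.comp (tendsto_rpow_atTop hb)))).add
      ((isLittleO_log_rpow_atTop hb).const_mul_left k))
  refine hlog.tendsto_div_nhds_zero.congr' ?_
  filter_upwards [eventually_gt_atTop 0] with x hx
  rw [Real.log_mul hC (by positivity), Real.log_pow]

theorem tendsto_const_mul_pow_pow_mul_pow_of_le_rpow {p : ℕ → ℕ} {a : ℝ} (ha : a < 1)
    (hp : ∀ᶠ n : ℕ in atTop, (p n : ℝ) ≤ (n : ℝ) ^ a) {C r : ℝ} (hC : 0 < C) (hr₀ : 0 < r)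
    (hr₁ : r < 1) (k : ℕ) :
    Tendsto (fun n : ℕ => (C * (n : ℝ) ^ k) ^ p n * r ^ n) atTop (𝓝 0) := by
  set L : ℕ → ℝ := fun n => Real.log (C * (n : ℝ) ^ k)
  have hL : Tendsto (fun n : ℕ => p n * L n / n) atTop (𝓝 0) := by
    refine squeeze_zero_norm' ?_ (by simpa using ((tendsto_log_const_mul_pow_div_rpow
      (sub_pos.mpr ha) hC.ne' k).comp tendsto_natCast_atTop_atTop).abs)
    filter_upwards [hp, eventually_gt_atTop 0] with n hpn hn
    have hn₀ : (0 : ℝ) < n := by exact_mod_cast hn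
    calc ‖p n * L n / n‖ = p n * |L n| / n := by
          rw [Real.norm_eq_abs, abs_div, abs_mul, Nat.abs_cast, Nat.abs_cast]
      _ ≤ (n : ℝ) ^ a * |L n| / n := by gcongr
      _ = |L n / (n : ℝ) ^ (1 - a)| := by
          rw [abs_div, abs_of_pos (Real.rpow_pos_of_pos hn₀ _), Real.rpow_sub hn₀, Real.rpow_one]
          field_simp
  -- the logarithm of the sequence is `n * (p n * L n / n + log r)`
  have hexp : Tendsto (fun n : ℕ => (n : ℝ) * (p n * L n / n + Real.log r)) atTop atBot :=
    tendsto_natCast_atTop_atTop.atTop_mul_neg (Real.log_neg hr₀ hr₁)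
      (by simpa using hL.add_const (Real.log r))
  refine (Real.tendsto_exp_atBot.comp hexp).congr' ?_
  filter_upwards [eventually_gt_atTop 0] with n hn
  have hn' : (n : ℝ) ≠ 0 := by positivity
  rw [Function.comp_apply, mul_add, mul_div_cancel₀ _ hn', Real.exp_add, Real.exp_nat_mul,
    Real.exp_nat_mul, Real.exp_log (by positivity), Real.exp_log hr₀]

section Probability

variable {Ω : Type*} [MeasurableSpace Ω] {P : Measure Ω}

theorem measure_lt_norm_le_ofReal_div_rpow [IsFiniteMeasure P] {F : Type*}
    [NormedAddCommGroup F] {Y : Ω → F} {q T B : ℝ} (hq : 0 < q) (hT : 0 < T)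
    (hint : Integrable (fun ω => ‖Y ω‖ ^ q) P) (hB : ∫ ω, ‖Y ω‖ ^ q ∂P ≤ B) :
    P {ω | T < ‖Y ω‖} ≤ ENNReal.ofReal (B / T ^ q) := by
  have hTq : 0 < T ^ q := Real.rpow_pos_of_pos hT q
  have hmarkov := mul_meas_ge_le_integral_of_nonneg
    (Eventually.of_forall fun ω => Real.rpow_nonneg (norm_nonneg (Y ω)) q) hint (T ^ q)
  calc P {ω | T < ‖Y ω‖} ≤ P {ω | T ^ q ≤ ‖Y ω‖ ^ q} :=
        measure_mono fun ω hω => Real.rpow_le_rpow hT.le (le_of_lt hω) hq.le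
    _ = ENNReal.ofReal (P.real {ω | T ^ q ≤ ‖Y ω‖ ^ q}) :=
        (ENNReal.ofReal_toReal (measure_ne_top _ _)).symm
    _ ≤ ENNReal.ofReal (B / T ^ q) :=
        ENNReal.ofReal_le_ofReal (by rw [le_div_iff₀ hTq]; linarith)

theorem ProbabilityTheory.iIndepFun.measure_forall_mem_le_pow {ι β : Type*} [Fintype ι]
    [MeasurableSpace β] {X : ι → Ω → β} (hX : iIndepFun X P) {A : Set β}
    (hA : MeasurableSet A) {c : ℝ≥0∞} (hc : ∀ i, P (X i ⁻¹' A) ≤ c) :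
    P {ω | ∀ i, X i ω ∈ A} ≤ c ^ Fintype.card ι := by
  have hset : {ω | ∀ i, X i ω ∈ A} = ⋂ i ∈ Finset.univ, X i ⁻¹' A := by ext; simp
  rw [hset, hX.measure_inter_preimage_eq_mul Finset.univ fun _ _ => hA]
  exact (Finset.prod_le_prod' fun i _ => hc i).trans_eq (by simp)

theorem measure_zero_notMem_interior_convexHull_le_s13 [IsFiniteMeasure P] {n d : ℕ} (hn : 0 < n)
    (hd : 0 < d) {X : Fin n → Ω → EuclideanSpace ℝ (Fin d)} (hX : iIndepFun X P)
    {ε r : ℝ} (hε : 0 < ε) (hr : 0 ≤ r)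
    (hdir : ∀ i (u : EuclideanSpace ℝ (Fin d)), ‖u‖ = 1 →
      P {ω | -ε < ⟪u, X i ω⟫} ≤ ENNReal.ofReal r)
    {q B T : ℝ} (hq : 0 < q) (hT : 0 < T) (hint : ∀ i, Integrable (fun ω => ‖X i ω‖ ^ q) P)
    (hmom : ∀ i, ∫ ω, ‖X i ω‖ ^ q ∂P ≤ B) :
    P {ω | (0 : EuclideanSpace ℝ (Fin d)) ∉ interior (convexHull ℝ (range fun i => X i ω))} ≤
      ENNReal.ofReal (n * (B / T ^ q) + (8 * √d * T / ε + 1) ^ d * r ^ n) := by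
  have : Nonempty (Fin n) := ⟨⟨0, hn⟩⟩
  obtain ⟨K, hK, v, hv1, hv⟩ := exists_unit_sphere_net hd (δ := ε / (4 * T)) (by positivity)
  set A : (Fin d → Fin K) → Set (EuclideanSpace ℝ (Fin d)) := fun k => {x | -ε < ⟪v k, x⟫}
  have hA : ∀ k, MeasurableSet (A k) := fun k =>
    measurableSet_lt measurable_const (continuous_const.inner continuous_id).measurable
  have hsub : {ω | (0 : EuclideanSpace ℝ (Fin d)) ∉ interior (convexHull ℝ (range fun i => X i ω))}
      ⊆ (⋃ i, {ω | T < ‖X i ω‖}) ∪ ⋃ k, {ω | ∀ i, X i ω ∈ A k} := by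
    intro ω hω
    by_contra hout
    simp only [mem_union, mem_iUnion, mem_ofPred_eq, not_or, not_exists, not_lt, not_forall] at hout
    obtain ⟨k, hk⟩ := exists_forall_neg_lt_inner_of_zero_notMem_interior_convexHull hω hout.1 hv
      (by field_simp; linarith : 2 * (ε / (4 * T)) * T < ε)
    obtain ⟨i, hi⟩ := hout.2 k
    exact hi (hk i)
  have hB : 0 ≤ B := (integral_nonneg fun ω => by positivity).trans (hmom ⟨0, hn⟩)
  calc _ ≤ ∑ i, P {ω | T < ‖X i ω‖} + ∑ k, P {ω | ∀ i, X i ω ∈ A k} :=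
        (measure_mono hsub).trans <| (measure_union_le _ _).trans <|
          add_le_add (measure_iUnion_fintype_le _ _) (measure_iUnion_fintype_le _ _)
    _ ≤ ∑ _i : Fin n, ENNReal.ofReal (B / T ^ q) +
          ∑ _k : Fin d → Fin K, ENNReal.ofReal r ^ n := by
        gcongr with i _ k _
        · exact measure_lt_norm_le_ofReal_div_rpow hq hT (hint i) (hmom i)
        · simpa using hX.measure_forall_mem_le_pow (hA k) fun i => hdir i (v k) (hv1 k)
    _ = ENNReal.ofReal (n * (B / T ^ q) + K ^ d * r ^ n) := by
        rw [ENNReal.ofReal_add (by positivity) (by positivity)]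
        simp [ENNReal.ofReal_mul, ENNReal.ofReal_pow, hr]
    _ ≤ _ := by
        gcongr
        refine hK.trans_eq ?_
        field_simp
        ring

theorem measure_zero_notMem_interior_convexHull_le_of_moment [IsFiniteMeasure P] {n d : ℕ}
    (hn : 0 < n) (hdn : (d : ℝ) ≤ n) {X : Fin n → Ω → EuclideanSpace ℝ (Fin d)}
    (hX : iIndepFun X P) {ε r : ℝ} (hε : 0 < ε) (hr : 0 ≤ r)
    (hdir : ∀ i (u : EuclideanSpace ℝ (Fin d)), ‖u‖ = 1 →
      P {ω | -ε < ⟪u, X i ω⟫} ≤ ENNReal.ofReal r)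
    {q M : ℝ} (hq : 2 ≤ q) (hint : ∀ i, Integrable (fun ω => ‖X i ω‖ ^ q) P)
    (hmom : ∀ i, ∫ ω, ‖(√(d : ℝ))⁻¹ • X i ω‖ ^ q ∂P ≤ M) :
    P {ω | (0 : EuclideanSpace ℝ (Fin d)) ∉ interior (convexHull ℝ (range fun i => X i ω))} ≤
      ENNReal.ofReal (M / n + ((8 / ε + 1) * (n : ℝ) ^ 2) ^ d * r ^ n) := by
  rcases Nat.eq_zero_or_pos d with rfl | hd
  · have : Nonempty (Fin n) := ⟨⟨0, hn⟩⟩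
    simp [zero_mem_interior_convexHull_of_subsingleton (range_nonempty _)]
  have hq₀ : 0 < q := by linarith
  have hn₁ : (1 : ℝ) ≤ n := by exact_mod_cast hn
  have hsd : 0 < √(d : ℝ) := Real.sqrt_pos.mpr (by exact_mod_cast hd)
  have hmomB : ∀ i, ∫ ω, ‖X i ω‖ ^ q ∂P ≤ M * √(d : ℝ) ^ q := fun i => by
    have h := hmom i
    simp_rw [norm_smul, Real.mul_rpow (norm_nonneg _) (norm_nonneg _), integral_const_mul,
      norm_inv, Real.norm_of_nonneg hsd.le, Real.inv_rpow hsd.le] at h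
    rwa [inv_mul_le_iff₀ (by positivity), mul_comm] at h
  -- at this truncation level Markov's inequality costs `M / n` in total
  set T := (n : ℝ) ^ (2 / q) * √(d : ℝ)
  refine (measure_zero_notMem_interior_convexHull_le_s13 hn hd hX hε hr hdir hq₀ (T := T)
    (by positivity) hint hmomB).trans (ENNReal.ofReal_le_ofReal (add_le_add (le_of_eq ?_) ?_))
  · rw [Real.mul_rpow (by positivity) hsd.le, ← Real.rpow_mul (Nat.cast_nonneg _),
      div_mul_cancel₀ _ hq₀.ne', Real.rpow_two]
    field_simp
  · gcongr
    have hnq : (n : ℝ) ^ (2 / q) ≤ n :=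
      Real.rpow_le_self_of_one_le hn₁ ((div_le_one hq₀).mpr hq)
    calc 8 * √(d : ℝ) * T / ε + 1 = 8 * (√(d : ℝ) * √(d : ℝ)) * (n : ℝ) ^ (2 / q) / ε + 1 := by
          ring
      _ = 8 * d * (n : ℝ) ^ (2 / q) / ε + 1 := by rw [Real.mul_self_sqrt (Nat.cast_nonneg d)]
      _ ≤ 8 * n * n / ε + n ^ 2 := by gcongr; nlinarith
      _ = (8 / ε + 1) * (n : ℝ) ^ 2 := by ring

theorem tendsto_measure_nhds_one_of_tendsto_measure_compl [IsProbabilityMeasure P] {α : Type*}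
    {l : Filter α} {s : α → Set Ω} (h : Tendsto (fun a => P (s a)ᶜ) l (𝓝 0)) :
    Tendsto (fun a => P (s a)) l (𝓝 1) := by
  refine tendsto_of_tendsto_of_tendsto_of_le_of_le
    (by simpa using ENNReal.Tendsto.sub tendsto_const_nhds h (.inl ENNReal.one_ne_top))
    tendsto_const_nhds (fun a => ?_) fun a => prob_le_one
  rw [tsub_le_iff_right, ← measure_univ (μ := P)]
  exact measure_univ_le_add_compl (s a)

end Probability

theorem zero_in_convex_hull_moment_case_general
    {Ω : Type*} [MeasurableSpace Ω] (P : Measure Ω) [IsProbabilityMeasure P]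
    (p : ℕ → ℕ)
    (X : (n : ℕ) → Fin n → Ω → EuclideanSpace ℝ (Fin (p n)))
    (hindep : ∀ n, iIndepFun (X n) P)
    (ε r : ℝ) (hε : 0 < ε) (hr : r < 1)
    (hdir : ∀ n (i : Fin n) (u : EuclideanSpace ℝ (Fin (p n))), ‖u‖ = 1 →
      P {ω | -ε < ⟪u, X n i ω⟫} ≤ ENNReal.ofReal r)
    -- condition (D7)
    (q M : ℝ) (hq : 2 < q)
    (hint : ∀ n (i : Fin n), Integrable (fun ω => ‖X n i ω‖ ^ q) P)
    (hmom : ∀ n (i : Fin n),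
      ∫ ω, ‖(Real.sqrt (p n))⁻¹ • X n i ω‖ ^ q ∂P ≤ M)
    (hgrowth : Tendsto (fun n => (p n : ℝ) ^ (3 + 6 / (q - 2)) / (n : ℝ))
      atTop (nhds 0)) :
    Tendsto (fun n => P {ω | (0 : EuclideanSpace ℝ (Fin (p n)))
        ∈ interior (convexHull ℝ (Set.range fun i : Fin n => X n i ω))})
      atTop (nhds 1)
    ∧ Tendsto (fun n => P {ω | ELval (p n) n (fun i => X n i ω) = 0})
      atTop (nhds 0) := by
  have hs : 1 < 3 + 6 / (q - 2) := by
    have : 0 < 6 / (q - 2) := div_pos (by norm_num) (by linarith)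
    linarith
  have hp := eventually_le_rpow_inv_of_tendsto_rpow_div (by linarith) hgrowth
  -- a larger `r` is still a bound in `hdir`, and the limit needs a positive one
  set r₁ := max r (1 / 2)
  have hr₁ : 0 < r₁ ∧ r₁ < 1 := ⟨lt_max_of_lt_right one_half_pos, max_lt hr one_half_lt_one⟩
  have hbad : Tendsto (fun n => P {ω | (0 : EuclideanSpace ℝ (Fin (p n)))
      ∉ interior (convexHull ℝ (range fun i : Fin n => X n i ω))}) atTop (𝓝 0) := by
    have hlim := (tendsto_const_div_atTop_nhds_zero_nat M).add
      (tendsto_const_mul_pow_pow_mul_pow_of_le_rpow (inv_lt_one_of_one_lt₀ hs) hp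
        (by positivity : 0 < 8 / ε + 1) hr₁.1 hr₁.2 2)
    refine tendsto_of_tendsto_of_tendsto_of_le_of_le' tendsto_const_nhds
      (by simpa using ENNReal.tendsto_ofReal hlim) (Eventually.of_forall fun n => zero_le) ?_
    filter_upwards [hp, eventually_gt_atTop 0] with n hpn hn
    exact measure_zero_notMem_interior_convexHull_le_of_moment hn
      (hpn.trans (Real.rpow_le_self_of_one_le (by exact_mod_cast hn) (inv_le_one_of_one_le₀ hs.le)))
      (hindep n) hε hr₁.1.le
      (fun i u hu => (hdir n i u hu).trans (ENNReal.ofReal_le_ofReal (le_max_left _ _)))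
      hq.le (hint n) (hmom n)
  refine ⟨tendsto_measure_nhds_one_of_tendsto_measure_compl hbad, ?_⟩
  exact tendsto_of_tendsto_of_tendsto_of_le_of_le tendsto_const_nhds hbad (fun n => zero_le)
    fun n => measure_mono fun ω hω h0 => (ELval_pos h0).ne' hω

/-- **Lemma 4.2(b).**
Triangular array of i.i.d. random vectors in `ℝ^{pₙ}`.  Suppose there exist `ε > 0`
and `r < 1` such that `P{uᵀ X_{n,1} > −ε} ≤ r` for every unit vector `u` and every
`n`, and that condition (D7) holds: for some `q > 2`,
`sup_n max_{i≤n} E‖Xₙᵢ/pₙ^{1/2}‖ᵠ < ∞` and `pₙ^{3+6/(q−2)}/n → 0`.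
Then the probability that `0` lies in the interior of the convex hull of
`{X_{n,1}, …, X_{n,n}}` tends to one; equivalently, `P{ELₙ = 0} → 0`
(condition (D0)). -/
theorem zero_in_convex_hull_moment_case
    {Ω : Type*} [MeasurableSpace Ω] (P : Measure Ω) [IsProbabilityMeasure P]
    (p : ℕ → ℕ)
    (X : (n : ℕ) → Fin n → Ω → EuclideanSpace ℝ (Fin (p n)))
    (hXmeas : ∀ n i, Measurable (X n i))
    (hindep : ∀ n, iIndepFun (X n) P)
    (hident : ∀ n, ∀ i j : Fin n, IdentDistrib (X n i) (X n j) P P)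
    (ε r : ℝ) (hε : 0 < ε) (hr : r < 1)
    (hdir : ∀ n (i : Fin n) (u : EuclideanSpace ℝ (Fin (p n))), ‖u‖ = 1 →
      P {ω | -ε < ⟪u, X n i ω⟫} ≤ ENNReal.ofReal r)
    -- condition (D7)
    (q M : ℝ) (hq : 2 < q)
    (hint : ∀ n (i : Fin n), Integrable (fun ω => ‖X n i ω‖ ^ q) P)
    (hmom : ∀ n (i : Fin n),
      ∫ ω, ‖(Real.sqrt (p n))⁻¹ • X n i ω‖ ^ q ∂P ≤ M)
    (hgrowth : Tendsto (fun n => (p n : ℝ) ^ (3 + 6 / (q - 2)) / (n : ℝ))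
      atTop (nhds 0)) :
    Tendsto (fun n => P {ω | (0 : EuclideanSpace ℝ (Fin (p n)))
        ∈ interior (convexHull ℝ (Set.range fun i : Fin n => X n i ω))})
      atTop (nhds 1)
    ∧ Tendsto (fun n => P {ω | ELval (p n) n (fun i => X n i ω) = 0})
      atTop (nhds 0) :=
  zero_in_convex_hull_moment_case_general P p X hindep ε r hε hr hdir q M hq hint hmom hgrowth
end

section
/- Let x₁, …, x_n ∈ ℝ^p and λ ∈ ℝ^p satisfy ‖λ‖ · max_{1≤i≤n} ‖x_i‖ ≤ 1/2. Then 1 + λ^T x_i > 0 for every i, and | 2 ∑_{i=1}^n log(1 + λ^T x_i) − 2 ∑_{i=1}^n λ^T x_i + ∑_{i=1}^n (λ^T x_i)² | ≤ (4/3) ‖λ‖ (max_{1≤i≤n} ‖x_i‖) ∑_{i=1}^n (λ^T x_i)². -/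
open scoped RealInnerProductSpace

/-!
With `f t = log (1 + t) - t + t² / 2` one has `f 0 = 0` and `f' t = t² / (1 + t)`, which lies
between `0` and `2 t²` as soon as `1 + t ≥ 1/2`. Hence `f` and `2 t³ / 3 - f` are both monotone on
`[-1/2, ∞)`, which traps `f t` between `0` and `2 t³ / 3`, i.e. `|f t| ≤ 2 |t|³ / 3`. By
Cauchy–Schwarz every `tᵢ = λᵀxᵢ` satisfies `|tᵢ| ≤ ‖λ‖ max ‖xᵢ‖ ≤ 1/2`, and summing the bounds
`2 |f tᵢ| ≤ (4/3) ‖λ‖ (max ‖xᵢ‖) tᵢ²` gives the theorem.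
-/

namespace Real

lemma hasDerivAt_log_one_add_sub_add_sq_div_two {t : ℝ} (ht : 1 + t ≠ 0) :
    HasDerivAt (fun s => log (1 + s) - s + s ^ 2 / 2) (t ^ 2 / (1 + t)) t := by
  have hlog : HasDerivAt (fun s => log (1 + s)) (1 / (1 + t)) t := by
    simpa using ((hasDerivAt_id t).const_add 1).log ht
  refine ((hlog.sub (hasDerivAt_id' t)).add ((hasDerivAt_pow 2 t).div_const 2)).congr_deriv ?_
  field_simp
  ring

lemma monotoneOn_log_one_add_sub_add_sq_div_two :
    MonotoneOn (fun s => log (1 + s) - s + s ^ 2 / 2) (Set.Ioi (-1)) := by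
  have hpos {t : ℝ} (ht : t ∈ Set.Ioi (-1)) : 0 < 1 + t := by rw [Set.mem_Ioi] at ht; linarith
  have hderiv {t : ℝ} (ht : t ∈ Set.Ioi (-1)) :=
    hasDerivAt_log_one_add_sub_add_sq_div_two (hpos ht).ne'
  refine monotoneOn_of_hasDerivWithinAt_nonneg (convex_Ioi _)
    (fun t ht => (hderiv ht).continuousAt.continuousWithinAt)
    (fun t ht => (hderiv (interior_subset ht)).hasDerivWithinAt) fun t ht => ?_
  have := hpos (interior_subset ht)
  positivity

lemma antitoneOn_log_one_add_sub_add_sq_div_two_sub_cube :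
    AntitoneOn (fun s => log (1 + s) - s + s ^ 2 / 2 - 2 / 3 * s ^ 3) (Set.Ici (-(1 / 2))) := by
  have hderiv {t : ℝ} (ht : -(1 / 2) ≤ t) :
      HasDerivAt (fun s => log (1 + s) - s + s ^ 2 / 2 - 2 / 3 * s ^ 3)
        (t ^ 2 / (1 + t) - 2 * t ^ 2) t := by
    refine ((hasDerivAt_log_one_add_sub_add_sq_div_two (by linarith)).sub
      ((hasDerivAt_pow 3 t).const_mul (2 / 3))).congr_deriv ?_
    ring
  refine antitoneOn_of_hasDerivWithinAt_nonpos (convex_Ici _)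
    (fun t ht => (hderiv ht).continuousAt.continuousWithinAt)
    (fun t ht => (hderiv (interior_subset ht)).hasDerivWithinAt) fun t ht => ?_
  rw [interior_Ici, Set.mem_Ioi] at ht
  have h1 : 0 < 1 + t := by linarith
  rw [sub_nonpos, div_le_iff₀ h1]
  nlinarith [sq_nonneg t]

lemma abs_log_one_add_sub_add_sq_div_two_le {t : ℝ} (ht : -(1 / 2) ≤ t) :
    |log (1 + t) - t + t ^ 2 / 2| ≤ 2 / 3 * |t| ^ 3 := by
  have hmono := monotoneOn_log_one_add_sub_add_sq_div_two
  have hanti := antitoneOn_log_one_add_sub_add_sq_div_two_sub_cube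
  have ht' : t ∈ Set.Ioi (-1) := by simp only [Set.mem_Ioi]; linarith
  have h0 : (0 : ℝ) ∈ Set.Ioi (-1) := by norm_num
  have h0' : (0 : ℝ) ∈ Set.Ici (-(1 / 2)) := by norm_num
  rcases le_total 0 t with hpos | hneg
  · have hlow := hmono h0 ht' hpos
    have hupp := hanti h0' ht hpos
    simp only [add_zero, log_one] at hlow hupp
    rw [abs_of_nonneg hpos, abs_le]
    constructor <;> nlinarith
  · have hupp := hmono ht' h0 hneg
    have hlow := hanti ht h0' hneg
    simp only [add_zero, log_one] at hlow hupp
    rw [abs_of_nonpos hneg, abs_le]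
    constructor <;> nlinarith

lemma abs_two_mul_log_one_add_sub_add_sq_le {t c : ℝ} (ht : -(1 / 2) ≤ t) (hc : |t| ≤ c) :
    |2 * log (1 + t) - 2 * t + t ^ 2| ≤ 4 / 3 * c * t ^ 2 := by
  calc |2 * log (1 + t) - 2 * t + t ^ 2| = 2 * |log (1 + t) - t + t ^ 2 / 2| := by
        rw [← abs_two, ← abs_mul]; ring_nf
    _ ≤ 2 * (2 / 3 * |t| ^ 3) := by gcongr; exact abs_log_one_add_sub_add_sq_div_two_le ht
    _ = 4 / 3 * |t| * t ^ 2 := by rw [pow_succ', sq_abs]; ring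
    _ ≤ 4 / 3 * c * t ^ 2 := by gcongr

end Real

theorem log_EL_quadratic_approximation_general
    (p n : ℕ)
    (x : Fin n → EuclideanSpace ℝ (Fin p))
    (lam : EuclideanSpace ℝ (Fin p))
    (h : ‖lam‖ * (⨆ i : Fin n, ‖x i‖) ≤ 1 / 2) :
    (∀ i : Fin n, 0 < 1 + ⟪lam, x i⟫)
    ∧ |2 * ∑ i : Fin n, Real.log (1 + ⟪lam, x i⟫)
        - 2 * ∑ i : Fin n, ⟪lam, x i⟫
        + ∑ i : Fin n, ⟪lam, x i⟫ ^ 2|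
      ≤ 4 / 3 * ‖lam‖ * (⨆ i : Fin n, ‖x i‖) * ∑ i : Fin n, ⟪lam, x i⟫ ^ 2 := by
  set M := ⨆ i : Fin n, ‖x i‖
  have hbound (i : Fin n) : |⟪lam, x i⟫| ≤ ‖lam‖ * M :=
    (abs_real_inner_le_norm _ _).trans <| mul_le_mul_of_nonneg_left
      (le_ciSup (f := fun j => ‖x j‖) (Set.finite_range _).bddAbove i) (norm_nonneg _)
  have hhalf (i : Fin n) : -(1 / 2) ≤ ⟪lam, x i⟫ := by
    linarith [neg_abs_le ⟪lam, x i⟫, hbound i]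
  refine ⟨fun i => by linarith [hhalf i], ?_⟩
  calc _ = |∑ i, (2 * Real.log (1 + ⟪lam, x i⟫) - 2 * ⟪lam, x i⟫ + ⟪lam, x i⟫ ^ 2)| := by
        rw [Finset.sum_add_distrib, Finset.sum_sub_distrib, Finset.mul_sum, Finset.mul_sum]
    _ ≤ ∑ i, |2 * Real.log (1 + ⟪lam, x i⟫) - 2 * ⟪lam, x i⟫ + ⟪lam, x i⟫ ^ 2| :=
        Finset.abs_sum_le_sum_abs _ _
    _ ≤ ∑ i, 4 / 3 * (‖lam‖ * M) * ⟪lam, x i⟫ ^ 2 := Finset.sum_le_sum fun i _ =>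
        Real.abs_two_mul_log_one_add_sub_add_sq_le (hhalf i) (hbound i)
    _ = _ := by rw [← Finset.mul_sum]; ring

/-- **Quadratic approximation bound for the log empirical likelihood criterion
(from the proofs of Theorem 2.1 and Proposition 4.1).**
Let `x₁, …, xₙ ∈ ℝ^p` (with `n ≥ 1`) and `λ ∈ ℝ^p` satisfy
`‖λ‖ · max_i ‖xᵢ‖ ≤ 1/2`.  Then `1 + λᵀxᵢ > 0` for every `i`, and
`|2 ∑ log(1 + λᵀxᵢ) − 2 ∑ λᵀxᵢ + ∑ (λᵀxᵢ)²|
  ≤ (4/3) ‖λ‖ (max_i ‖xᵢ‖) ∑ (λᵀxᵢ)²`. -/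
theorem log_EL_quadratic_approximation
    (p n : ℕ) (hn : 0 < n)
    (x : Fin n → EuclideanSpace ℝ (Fin p))
    (lam : EuclideanSpace ℝ (Fin p))
    (h : ‖lam‖ * (⨆ i : Fin n, ‖x i‖) ≤ 1 / 2) :
    (∀ i : Fin n, 0 < 1 + ⟪lam, x i⟫)
    ∧ |2 * ∑ i : Fin n, Real.log (1 + ⟪lam, x i⟫)
        - 2 * ∑ i : Fin n, ⟪lam, x i⟫
        + ∑ i : Fin n, ⟪lam, x i⟫ ^ 2|
      ≤ 4 / 3 * ‖lam‖ * (⨆ i : Fin n, ‖x i‖) * ∑ i : Fin n, ⟪lam, x i⟫ ^ 2 :=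
  log_EL_quadratic_approximation_general p n x lam h
end
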